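/- arXiv:1912.11261 — 6 statements merged into one kernel-verified Lean document; each statement's English description precedes it below -/
import Mathlib

section
/- Let α and β be algebraic numbers with αβ = 2^(k-1) for some integer k ≥ 2, and suppose α + β ∈ 3·Z̄₃ (i.e. the 3-adic valuation of α+β is positive, under a fixed embedding into an algebraic closure of Q₃) while α and β are 3-adic units. If α/β is a root of unity ζ, then ζ = -1 (equivalently α + β = 0). -/
/-!
Put `η = -ζ`, so that `1 - η = (α + β) / β` has valuation at most `v 3 < 1`. If `η ≠ 1` were an
`n`-th root of unity with `3 ∤ n`, then `n = ∑_{i<n} (1 - η ^ i)` would have valuation at most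
`v (1 - η) < 1 = v n`; hence `η` has `3`-power order. A cube root of unity `ω ≠ 1` satisfies
`(1 - ω) ^ 2 = -3ω`, so `v (1 - ω) ^ 2 = v 3`, which is incompatible with `v (1 - ω) ≤ v 3 < 1`.
Descending along `η, η ^ 3, η ^ 9, …`, all equally close to `1`, forces `η = 1`.
-/

namespace Valuation

variable {K Γ₀ : Type*} [Field K] [LinearOrderedCommGroupWithZero Γ₀] (v : Valuation K Γ₀)

theorem map_le_one_of_map_one_sub_le_one {η : K} (h : v (1 - η) ≤ 1) : v η ≤ 1 := by
  calc v η = v (1 - (1 - η)) := by rw [sub_sub_cancel]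
    _ ≤ max (v 1) (v (1 - η)) := v.map_sub _ _
    _ ≤ 1 := max_le v.map_one.le h

theorem map_one_sub_pow_le {η : K} (hη : v η ≤ 1) (i : ℕ) : v (1 - η ^ i) ≤ v (1 - η) := by
  induction i with
  | zero => simp
  | succ i ih =>
    calc v (1 - η ^ (i + 1)) = v ((1 - η ^ i) + η ^ i * (1 - η)) := by ring_nf
      _ ≤ max (v (1 - η ^ i)) (v (η ^ i * (1 - η))) := v.map_add _ _
      _ ≤ v (1 - η) := by
        refine max_le ih ?_
        rw [v.map_mul, v.map_pow]
        exact mul_le_of_le_one_left' (pow_le_one' hη i)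

theorem map_natCast_le_one (n : ℕ) : v (n : K) ≤ 1 := by
  induction n with
  | zero => simp
  | succ n ih =>
    push_cast
    exact (v.map_add _ _).trans (max_le ih v.map_one.le)

theorem eq_one_of_pow_eq_one_of_map_one_sub_lt {η : K} {m : ℕ} (hm : η ^ m = 1)
    (h : v (1 - η) < v (m : K)) : η = 1 := by
  by_contra hne
  have hη : v η ≤ 1 :=
    v.map_le_one_of_map_one_sub_le_one (h.le.trans (v.map_natCast_le_one m))
  have hsum : (m : K) = ∑ i ∈ Finset.range m, (1 - η ^ i) := by
    rw [Finset.sum_sub_distrib, geom_sum_eq hne, hm, sub_self, zero_div, sub_zero,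
      Finset.sum_const, Finset.card_range, nsmul_one]
  have : v (m : K) ≤ v (1 - η) := hsum ▸ v.map_sum_le fun i _ => v.map_one_sub_pow_le hη i
  exact this.not_gt h

theorem map_eq_one_of_pow_eq_one {η : K} {m : ℕ} (hm : η ^ m = 1) (hm0 : m ≠ 0) : v η = 1 := by
  rw [← pow_eq_one_iff_of_nonneg zero_le hm0, ← v.map_pow, hm, v.map_one]

theorem eq_one_of_pow_three_eq_one {ω : K} (hω : ω ^ 3 = 1) (h : v (1 - ω) ^ 2 < v 3) :
    ω = 1 := by
  by_contra hne
  have hquad : ω ^ 2 + ω + 1 = 0 := by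
    have : (ω - 1) * (ω ^ 2 + ω + 1) = 0 := by linear_combination hω
    exact (mul_eq_zero.mp this).resolve_left (sub_ne_zero.mpr hne)
  have : v (1 - ω) ^ 2 = v 3 := by
    rw [← v.map_pow, show (1 - ω) ^ 2 = -(3 * ω) by linear_combination hquad, v.map_neg,
      v.map_mul, v.map_eq_one_of_pow_eq_one hω three_ne_zero, mul_one]
  exact h.ne this

section ThreeAdic

variable {v}

theorem eq_one_of_pow_three_pow_eq_one_of_map_one_sub_le (h3 : v (3 : K) ≠ 0)
    (h3_lt : v (3 : K) < 1) (j : ℕ) {η : K}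
    (hη : η ^ 3 ^ j = 1) (h : v (1 - η) ≤ v 3) : η = 1 := by
  induction j generalizing η with
  | zero => simpa using hη
  | succ j ih =>
    have hη_le : v η ≤ 1 := v.map_le_one_of_map_one_sub_le_one (h.trans h3_lt.le)
    have hcube : η ^ 3 = 1 :=
      ih (by rw [← pow_mul, ← pow_succ', hη]) ((v.map_one_sub_pow_le hη_le 3).trans h)
    refine v.eq_one_of_pow_three_eq_one hcube ?_
    calc v (1 - η) ^ 2 ≤ v 3 ^ 2 := pow_le_pow_left₀ zero_le h 2
      _ < v 3 := by
        rw [sq]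
        exact mul_lt_of_lt_one_right (zero_lt_iff.mpr h3) h3_lt

theorem eq_one_of_pow_eq_one_of_map_one_sub_le (h3 : v (3 : K) ≠ 0) (h3_lt : v (3 : K) < 1)
    (hunit : ∀ n : ℕ, ¬3 ∣ n → v (n : K) = 1)
    {η : K} {m : ℕ} (hm : η ^ m = 1) (hm0 : m ≠ 0) (h : v (1 - η) ≤ v 3) : η = 1 := by
  obtain ⟨j, n, hn, rfl⟩ := Nat.exists_eq_pow_mul_and_not_dvd hm0 3 (by norm_num)
  have hη_le : v η ≤ 1 := v.map_le_one_of_map_one_sub_le_one (h.trans h3_lt.le)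
  have : η ^ 3 ^ j = 1 := by
    refine v.eq_one_of_pow_eq_one_of_map_one_sub_lt (m := n) (by rw [← pow_mul, hm]) ?_
    rw [hunit n hn]
    exact ((v.map_one_sub_pow_le hη_le _).trans h).trans_lt h3_lt
  exact eq_one_of_pow_three_pow_eq_one_of_map_one_sub_le h3 h3_lt j this h

end ThreeAdic

end Valuation

section PadicExtension

variable {p : ℕ} [Fact p.Prime] {K : Type*} [Field K] [Algebra ℚ_[p] K] {v : Valuation K NNReal}

theorem Valuation.map_natCast_of_nnnorm (hv : ∀ x : ℚ_[p], v (algebraMap ℚ_[p] K x) = ‖x‖₊)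
    (n : ℕ) : v (n : K) = ‖(n : ℚ_[p])‖₊ := by
  rw [← map_natCast (algebraMap ℚ_[p] K), hv]

theorem Valuation.map_prime_of_nnnorm (hv : ∀ x : ℚ_[p], v (algebraMap ℚ_[p] K x) = ‖x‖₊) :
    v (p : K) = (p : NNReal)⁻¹ := by
  rw [v.map_natCast_of_nnnorm hv]
  ext
  simp [Padic.norm_p]

theorem Valuation.map_natCast_of_not_dvd (hv : ∀ x : ℚ_[p], v (algebraMap ℚ_[p] K x) = ‖x‖₊)
    {n : ℕ} (hn : ¬p ∣ n) : v (n : K) = 1 := by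
  rw [v.map_natCast_of_nnnorm hv]
  ext
  simpa [Padic.norm_natCast_eq_one_iff] using (Nat.Prime.coprime_iff_not_dvd Fact.out).mpr hn

end PadicExtension

theorem stmt_0_general [Fact (Nat.Prime 3)]
    (K : Type*) [Field K] [Algebra ℚ_[3] K]
    (v : Valuation K NNReal)
    (hv : ∀ x : ℚ_[3], v (algebraMap ℚ_[3] K x) = ‖x‖₊)
    (α β ζ : K)
    (hβunit : v β = 1)
    (hsum : v (α + β) ≤ v (3 : K))
    (hζ : α = ζ * β)
    (hroot : ∃ m : ℕ, 0 < m ∧ ζ ^ m = 1) :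
    ζ = -1 ∧ α + β = 0 := by
  obtain ⟨m, hm, hζm⟩ := hroot
  have hv3 : v (3 : K) = 3⁻¹ := by exact_mod_cast v.map_prime_of_nnnorm hv
  have hsum_eq : α + β = (1 - -ζ) * β := by rw [hζ]; ring
  have hclose : v (1 - -ζ) ≤ v 3 := by rwa [hsum_eq, v.map_mul, hβunit, mul_one] at hsum
  have hηroot : (-ζ) ^ (2 * m) = 1 := by rw [(even_two_mul m).neg_pow, pow_mul', hζm, one_pow]
  have hζ_eq : -ζ = 1 :=
    Valuation.eq_one_of_pow_eq_one_of_map_one_sub_le (by simp [hv3]) (by rw [hv3]; norm_num)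
      (fun n hn => v.map_natCast_of_not_dvd hv hn) hηroot (by omega) hclose
  have hζ_neg : ζ = -1 := by linear_combination -hζ_eq
  exact ⟨hζ_neg, by rw [hsum_eq, hζ_neg]; ring⟩

/-- Let `α` and `β` be algebraic numbers with `α * β = 2 ^ (k - 1)` for some
integer `k ≥ 2`, viewed inside an algebraic closure `K` of `ℚ₃` (with `v` the unique extension
of the 3-adic valuation).  Suppose `α` and `β` are 3-adic units while `α + β ∈ 3 · Z̄₃`
(i.e. `v (α + β) ≤ v 3`).  If `α / β` is a root of unity `ζ`, then `ζ = -1`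
(equivalently `α + β = 0`). -/
theorem stmt_0 [Fact (Nat.Prime 3)]
    (K : Type*) [Field K] [CharZero K] [Algebra ℚ_[3] K] [IsAlgClosure ℚ_[3] K]
    (v : Valuation K NNReal)
    (hv : ∀ x : ℚ_[3], v (algebraMap ℚ_[3] K x) = ‖x‖₊)
    (k : ℕ) (hk : 2 ≤ k) (α β ζ : K)
    (hαalg : IsAlgebraic ℚ α) (hβalg : IsAlgebraic ℚ β)
    (hprod : α * β = (2 : K) ^ (k - 1))
    (hαunit : v α = 1) (hβunit : v β = 1)
    (hsum : v (α + β) ≤ v (3 : K))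
    (hζ : α = ζ * β)
    (hroot : ∃ m : ℕ, 0 < m ∧ ζ ^ m = 1) :
    ζ = -1 ∧ α + β = 0 :=
  stmt_0_general K v hv α β ζ hβunit hsum hζ hroot
end

section
/- Let k ≥ 2 and m ≥ 0 be integers, and set v = v₂ (the 2-adic valuation normalized by v(2)=1). Define w = 5^(k-2)·ζ − 1 where ζ is a primitive 2^m-th root of unity in an algebraic closure of Q₂. If either k is odd, or k is even and m ≥ 1, then v(w) = 2^(1-m) when m ≥ 1, and v(w) = 2 when m = 0 and k is odd. In particular (k−1)/v(w) is an integer in both cases. -/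
/-!
Write `v` multiplicatively. Since `5 ^ n - 1 = 4 * ∑ i < n, 5 ^ i`, we have
`v (5 ^ n - 1) ≤ v 4`, with equality when `n` is odd (the geometric sum is then odd). For a
primitive `2 ^ (m + 1)`-th root of unity `ζ`, the elements `ζ` and `-ζ` are odd powers of each
other, which forces `v (ζ + 1) = v (ζ - 1)`; hence `v (ζ ^ 2 - 1) = v (ζ - 1) ^ 2`, and
induction down to `ζ = -1` gives `v (ζ - 1) ^ 2 ^ m = v 2`. In particular `v (ζ - 1) > v 4`, so
in `w = ζ * (5 ^ (k - 2) - 1) + (ζ - 1)` the second summand dominates. For `m = 0` we have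
`ζ = 1` and `w = 5 ^ (k - 2) - 1` with `k - 2` odd.
-/

open Finset

namespace Valuation

variable {K Γ₀ : Type*} [Field K] [LinearOrderedCommGroupWithZero Γ₀] (v : Valuation K Γ₀)

lemma map_le_one_of_pow_eq_one {x : K} {n : ℕ} (hn : n ≠ 0) (h : x ^ n = 1) : v x ≤ 1 := by
  by_contra! hx
  simpa [← map_pow, h] using one_lt_pow' hx hn

lemma map_pow_sub_one_le {x : K} (hx : v x ≤ 1) (j : ℕ) : v (x ^ j - 1) ≤ v (x - 1) := by
  rw [← geom_sum_mul, map_mul]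
  refine mul_le_of_le_one_left' (v.map_sum_le fun i _ => ?_)
  rw [map_pow]
  exact pow_le_one' hx i

lemma map_add_one_eq_map_sub_one {x : K} (hx : v x ≤ 1) {j : ℕ} (hj : Odd j)
    (h : x ^ j = -x) : v (x + 1) = v (x - 1) := by
  have hneg : v (-x - 1) = v (x + 1) := by rw [← v.map_neg]; ring_nf
  refine le_antisymm ?_ ?_
  · rw [← hneg, ← h]
    exact v.map_pow_sub_one_le hx j
  · have := v.map_pow_sub_one_le (x := -x) (by rwa [v.map_neg]) j
    rwa [hj.neg_pow, h, neg_neg, hneg] at this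

lemma map_sub_one_pow_eq_map_two {ζ : K} {m : ℕ} (hζ : IsPrimitiveRoot ζ (2 ^ (m + 1))) :
    v (ζ - 1) ^ 2 ^ m = v 2 := by
  induction m generalizing ζ with
  | zero =>
    rw [(by simpa using hζ : IsPrimitiveRoot ζ 2).eq_neg_one_of_two_right,
      show (-1 : K) - 1 = -2 by ring, v.map_neg, pow_zero, pow_one]
  | succ m ih =>
    have hζ1 : v ζ ≤ 1 := v.map_le_one_of_pow_eq_one (by positivity) hζ.pow_eq_one
    have hhalf : ζ ^ 2 ^ (m + 1) = -1 :=
      (hζ.pow (by positivity) (pow_succ 2 (m + 1))).eq_neg_one_of_two_right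
    have hodd : Odd (2 ^ (m + 1) + 1) := by simp [parity_simps]
    have hplus : v (ζ + 1) = v (ζ - 1) :=
      v.map_add_one_eq_map_sub_one hζ1 hodd (by rw [pow_succ, hhalf, neg_one_mul])
    have hsq : v (ζ ^ 2 - 1) = v (ζ - 1) ^ 2 := by
      rw [show ζ ^ 2 - 1 = (ζ - 1) * (ζ + 1) by ring, map_mul, hplus, sq]
    rw [pow_succ', pow_mul, ← hsq]
    exact ih (hζ.pow (by positivity) (pow_succ' 2 (m + 1)))

lemma sq_map_two_lt_map_sub_one {ζ : K} {m : ℕ} (hζ : IsPrimitiveRoot ζ (2 ^ (m + 1)))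
    (h2 : v 2 < 1) : v 2 ^ 2 < v (ζ - 1) := by
  have hζ1 : v (ζ - 1) ≤ 1 :=
    v.map_sub_le (v.map_le_one_of_pow_eq_one (by positivity) hζ.pow_eq_one) v.map_one.le
  have h2ne : v 2 ≠ 0 := by
    rw [← v.map_sub_one_pow_eq_map_two hζ]
    exact pow_ne_zero _ (v.ne_zero_iff.mpr (sub_ne_zero.mpr (hζ.ne_one (by simp))))
  by_contra! hle
  have : v 2 ≤ v 2 * v 2 := calc
    v 2 = v (ζ - 1) ^ 2 ^ m := (v.map_sub_one_pow_eq_map_two hζ).symm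
    _ ≤ v (ζ - 1) := pow_le_of_le_one zero_le hζ1 (by positivity)
    _ ≤ v 2 ^ 2 := hle
    _ = v 2 * v 2 := sq _
  exact h2.not_ge ((le_mul_iff_one_le_right (zero_lt_iff.mpr h2ne)).mp this)

end Valuation

lemma Nat.odd_geom_sum {x n : ℕ} (hx : Odd x) (hn : Odd n) : Odd (∑ i ∈ range n, x ^ i) := by
  rw [Nat.odd_iff] at hx hn ⊢
  simp [Finset.sum_nat_mod, Nat.pow_mod, hx, hn]

lemma five_pow_sub_one_eq {R : Type*} [CommRing R] (n : ℕ) :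
    (5 : R) ^ n - 1 = 2 ^ 2 * ((∑ i ∈ range n, 5 ^ i : ℕ) : R) := by
  push_cast
  rw [← geom_sum_mul]
  ring

namespace Valuation

variable {K : Type*} [Field K] [Algebra ℚ_[2] K] (v : Valuation K NNReal)

lemma map_natCast_eq_nnnorm
    (hv : ∀ x : ℚ_[2], v (algebraMap ℚ_[2] K x) = ‖x‖₊) (t : ℕ) :
    v (t : K) = ‖(t : ℚ_[2])‖₊ := by
  rw [← hv, map_natCast (algebraMap ℚ_[2] K)]

lemma map_natCast_le_one_s2
    (hv : ∀ x : ℚ_[2], v (algebraMap ℚ_[2] K x) = ‖x‖₊) (t : ℕ) :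
    v (t : K) ≤ 1 := by
  rw [v.map_natCast_eq_nnnorm hv, ← NNReal.coe_le_coe]
  simpa using Padic.norm_int_le_one (p := 2) t

lemma map_natCast_of_odd
    (hv : ∀ x : ℚ_[2], v (algebraMap ℚ_[2] K x) = ‖x‖₊) {t : ℕ} (ht : Odd t) :
    v (t : K) = 1 := by
  rw [v.map_natCast_eq_nnnorm hv, ← NNReal.coe_inj]
  simpa [Nat.coprime_two_left] using ht

lemma map_two_lt_one
    (hv : ∀ x : ℚ_[2], v (algebraMap ℚ_[2] K x) = ‖x‖₊) :
    v (2 : K) < 1 := by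
  change v ((2 : ℕ) : K) < 1
  rw [v.map_natCast_eq_nnnorm hv, ← NNReal.coe_lt_one, coe_nnnorm]
  exact Padic.norm_natCast_lt_one_iff.mpr dvd_rfl

lemma map_five_pow_sub_one_le
    (hv : ∀ x : ℚ_[2], v (algebraMap ℚ_[2] K x) = ‖x‖₊) (n : ℕ) :
    v ((5 : K) ^ n - 1) ≤ v 2 ^ 2 := by
  rw [five_pow_sub_one_eq, map_mul, map_pow]
  exact mul_le_of_le_one_right' (v.map_natCast_le_one_s2 hv _)

lemma map_five_pow_sub_one_of_odd
    (hv : ∀ x : ℚ_[2], v (algebraMap ℚ_[2] K x) = ‖x‖₊) {n : ℕ} (hn : Odd n) :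
    v ((5 : K) ^ n - 1) = v 2 ^ 2 := by
  rw [five_pow_sub_one_eq, map_mul, map_pow,
    v.map_natCast_of_odd hv (Nat.odd_geom_sum (by decide) hn), mul_one]

lemma map_five_pow_mul_sub_one_of_isPrimitiveRoot
    (hv : ∀ x : ℚ_[2], v (algebraMap ℚ_[2] K x) = ‖x‖₊) {ζ : K} {m : ℕ}
    (hζ : IsPrimitiveRoot ζ (2 ^ (m + 1))) (n : ℕ) :
    v ((5 : K) ^ n * ζ - 1) = v (ζ - 1) := by
  have hsmall : v (ζ * ((5 : K) ^ n - 1)) ≤ v 2 ^ 2 := by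
    rw [map_mul]
    exact mul_le_of_le_one_left' (v.map_le_one_of_pow_eq_one (by positivity) hζ.pow_eq_one)
      |>.trans (v.map_five_pow_sub_one_le hv n)
  rw [show (5 : K) ^ n * ζ - 1 = ζ * ((5 : K) ^ n - 1) + (ζ - 1) by ring]
  exact v.map_add_eq_of_lt_right
    (hsmall.trans_lt (v.sq_map_two_lt_map_sub_one hζ (v.map_two_lt_one hv)))

end Valuation

theorem stmt_2_general
    (K : Type*) [Field K] [Algebra ℚ_[2] K]
    (v : Valuation K NNReal)
    (hv : ∀ x : ℚ_[2], v (algebraMap ℚ_[2] K x) = ‖x‖₊)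
    (k m : ℕ) (hk : 2 ≤ k)
    (ζ : K) (hζ : IsPrimitiveRoot ζ (2 ^ m))
    (w : K) (hw : w = (5 : K) ^ (k - 2) * ζ - 1)
    (hcase : Odd k ∨ (Even k ∧ 1 ≤ m)) :
    ((1 ≤ m → v w ^ (2 ^ (m - 1)) = v (2 : K)) ∧
      (m = 0 ∧ Odd k → v w = v (2 : K) ^ 2)) ∧
    ∃ N : ℕ, 0 < N ∧ v w ^ N = v (2 : K) ^ (k - 1) := by
  cases m with
  | zero =>
    obtain ⟨j, rfl⟩ : Odd k := by simpa using hcase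
    have hζ1 : ζ = 1 := IsPrimitiveRoot.one_right_iff.mp (by simpa using hζ)
    have hvw : v w = v 2 ^ 2 := by
      rw [hw, hζ1, mul_one, v.map_five_pow_sub_one_of_odd hv ⟨j - 1, by omega⟩]
    refine ⟨⟨by simp, fun _ => hvw⟩, j, by omega, ?_⟩
    rw [hvw, ← pow_mul, Nat.add_sub_cancel, mul_comm]
  | succ m =>
    have hvw : v w = v (ζ - 1) := 
      hw ▸ v.map_five_pow_mul_sub_one_of_isPrimitiveRoot hv hζ _
    have hval : v (ζ - 1) ^ 2 ^ m = v 2 := v.map_sub_one_pow_eq_map_two hζ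
    refine ⟨⟨fun _ => by rwa [hvw], by simp⟩, 2 ^ m * (k - 1),
      Nat.mul_pos (by positivity) (by omega), ?_⟩
    rw [pow_mul, hvw, hval]

/-- Let `k ≥ 2`, `m ≥ 0`, and let `v` be (the unique extension to an algebraic
closure `K` of `ℚ₂` of) the 2-adic valuation, here taken multiplicatively so that the additive
valuation normalized by `val 2 = 1` corresponds to `v`.  Let `ζ` be a primitive `2^m`-th root
of unity and `w = 5^(k-2) · ζ - 1`.  If `k` is odd, or `k` is even and `m ≥ 1`, then:
`val w = 2^(1-m)` when `m ≥ 1` (expressed multiplicatively as `v w ^ (2 ^ (m-1)) = v 2`),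
and `val w = 2` when `m = 0` and `k` is odd (i.e. `v w = (v 2)^2`).  In particular
`(k - 1) / val w` is a (positive) integer in both cases, expressed as
`∃ N > 0, v w ^ N = v 2 ^ (k-1)`. -/
theorem stmt_2 [Fact (Nat.Prime 2)]
    (K : Type*) [Field K] [CharZero K] [Algebra ℚ_[2] K] [IsAlgClosure ℚ_[2] K]
    (v : Valuation K NNReal)
    (hv : ∀ x : ℚ_[2], v (algebraMap ℚ_[2] K x) = ‖x‖₊)
    (k m : ℕ) (hk : 2 ≤ k)
    (ζ : K) (hζ : IsPrimitiveRoot ζ (2 ^ m))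
    (w : K) (hw : w = (5 : K) ^ (k - 2) * ζ - 1)
    (hcase : Odd k ∨ (Even k ∧ 1 ≤ m)) :
    ((1 ≤ m → v w ^ (2 ^ (m - 1)) = v (2 : K)) ∧
      (m = 0 ∧ Odd k → v w = v (2 : K) ^ 2)) ∧
    ∃ N : ℕ, 0 < N ∧ v w ^ N = v (2 : K) ^ (k - 1) :=
  stmt_2_general K v hv k m hk ζ hζ w hw hcase
end

section
/- Let G be a profinite group, L a closed normal subgroup, and ρ̄: G → GL_n(k) a continuous representation over a finite field k of characteristic p, decomposing as ρ̄ = σ̄₁ ⊕ σ̄₂ with σ̄_i of dimension n_i. Suppose H^0 and H^1 of G with coefficients in Hom(σ̄₁, σ̄₂) and in Hom(σ̄₂, σ̄₁) all vanish. Then for any complete Noetherian local ring R with residue field k and any continuous lift ρ: G → GL_n(R) of ρ̄, there exist continuous lifts σ_i: G → GL_{n_i}(R) of σ̄_i such that σ₁ ⊕ σ₂ is conjugate to ρ by an element of 1 + M_n(m_R), and each σ_i is unique up to conjugation by 1 + M_{n_i}(m_R). -/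
/-!
If the off-diagonal blocks of `ρ` lie in `𝔪^t` (`t ≥ 1`), the upper-right block `B` satisfies
`B(gh) = A(g) B(h) + B(g) D(h)` exactly, so modulo `𝔪^(t+1)` it is a continuous 1-cocycle with
values in `Hom(σ̄₂, σ̄₁) ⊗ 𝔪^t/𝔪^(t+1)`. Coordinates in a `k`-basis of `𝔪^t/𝔪^(t+1)` split it into
finitely many `k`-valued cocycles, which are coboundaries since `H¹` vanishes; lifting the
primitives gives `X` with entries in `𝔪^t`, and likewise `Y` for the lower-left block. Conjugating
by `1 + [[0, X], [Y, 0]]` changes `ρ` by its commutator with `[[0, X], [Y, 0]]` modulo `𝔪^(2t)`,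
which pushes both blocks into `𝔪^(t+1)`. The conjugators converge `𝔪`-adically and the limit
conjugates `ρ` to a block-diagonal representation.

For uniqueness, if `C` and `C'` conjugate two block-diagonal lifts to `ρ`, then `C'⁻¹ C` intertwines
them, and its diagonal blocks are `≡ 1 mod 𝔪`, hence invertible intertwiners of the blocks.
-/

def IsSplitLift {G k R : Type*} [Group G] [TopologicalSpace G] [Field k]
    [CommRing R] [IsLocalRing R] [TopologicalSpace R] {n₁ n₂ : ℕ}
    (π : R →+* k)
    (σb₁ : G →* Matrix.GeneralLinearGroup (Fin n₁) k)
    (σb₂ : G →* Matrix.GeneralLinearGroup (Fin n₂) k)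
    (ρ : G →* Matrix.GeneralLinearGroup (Fin n₁ ⊕ Fin n₂) R)
    (σ₁ : G →* Matrix.GeneralLinearGroup (Fin n₁) R)
    (σ₂ : G →* Matrix.GeneralLinearGroup (Fin n₂) R) : Prop :=
  Continuous (fun g => (σ₁ g : Matrix (Fin n₁) (Fin n₁) R)) ∧
  Continuous (fun g => (σ₂ g : Matrix (Fin n₂) (Fin n₂) R)) ∧
  (∀ g, ((σ₁ g : Matrix (Fin n₁) (Fin n₁) R)).map π = (σb₁ g : Matrix (Fin n₁) (Fin n₁) k)) ∧
  (∀ g, ((σ₂ g : Matrix (Fin n₂) (Fin n₂) R)).map π = (σb₂ g : Matrix (Fin n₂) (Fin n₂) k)) ∧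
  ∃ C : Matrix.GeneralLinearGroup (Fin n₁ ⊕ Fin n₂) R,
    (∀ i j, ((C : Matrix (Fin n₁ ⊕ Fin n₂) (Fin n₁ ⊕ Fin n₂) R) - 1) i j ∈
      IsLocalRing.maximalIdeal R) ∧
    ∀ g, (C : Matrix (Fin n₁ ⊕ Fin n₂) (Fin n₁ ⊕ Fin n₂) R) *
        Matrix.fromBlocks ((σ₁ g : Matrix (Fin n₁) (Fin n₁) R)) 0 0
          ((σ₂ g : Matrix (Fin n₂) (Fin n₂) R)) *
        ((C⁻¹ : Matrix.GeneralLinearGroup (Fin n₁ ⊕ Fin n₂) R) :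
          Matrix (Fin n₁ ⊕ Fin n₂) (Fin n₁ ⊕ Fin n₂) R) =
      (ρ g : Matrix (Fin n₁ ⊕ Fin n₂) (Fin n₁ ⊕ Fin n₂) R)

open IsLocalRing Matrix

namespace Ideal

variable {R : Type*} [CommRing R] {l m n : Type*}

def matrices (I : Ideal R) (m n : Type*) : Submodule R (Matrix m n R) where
  carrier := {X | ∀ i j, X i j ∈ I}
  add_mem' hX hY i j := add_mem (hX i j) (hY i j)
  zero_mem' _ _ := zero_mem I
  smul_mem' r _ hX i j := I.mul_mem_left r (hX i j)

variable {I J : Ideal R} {X : Matrix m n R}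

theorem matrices_mono (h : I ≤ J) : I.matrices m n ≤ J.matrices m n :=
  fun _ hX i j => h (hX i j)

theorem mul_mem_matrices_left [Fintype m] (A : Matrix l m R) (hX : X ∈ I.matrices m n) :
    A * X ∈ I.matrices l n :=
  fun _ j => I.sum_mem fun u _ => I.mul_mem_left _ (hX u j)

theorem mul_mem_matrices_right [Fintype n] (hX : X ∈ I.matrices m n) (B : Matrix n l R) :
    X * B ∈ I.matrices m l :=
  fun i _ => I.sum_mem fun u _ => I.mul_mem_right _ (hX i u)

theorem mul_mem_matrices_mul [Fintype n] {Y : Matrix n l R} (hX : X ∈ I.matrices m n)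
    (hY : Y ∈ J.matrices n l) : X * Y ∈ (I * J).matrices m l :=
  fun i j => (I * J).sum_mem fun u _ => mul_mem_mul (hX i u) (hY u j)

theorem eq_zero_of_forall_mem_pow_matrices [IsHausdorff I R]
    (hX : ∀ t, X ∈ (I ^ t).matrices m n) : X = 0 := by
  ext i j
  refine IsHausdorff.haus ‹_› _ fun t => ?_
  rw [SModEq.sub_mem, sub_zero, smul_eq_mul, mul_top]
  exact hX t i j

theorem exists_matrix_limit_of_approx [IsPrecomplete I R] {T : Type*} (v : T → Matrix m n R)
    (P : ℕ → T → Prop) {x₀ : T} (h₀ : P 0 x₀)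
    (hstep : ∀ t x, P t x → ∃ y, P (t + 1) y ∧ v y - v x ∈ (I ^ t).matrices m n) :
    ∃ L : Matrix m n R, ∀ t, ∃ x, P t x ∧ L - v x ∈ (I ^ t).matrices m n := by
  choose! next hnextP hnext using hstep
  let x (t : ℕ) : T := Nat.rec x₀ next t
  have hP (t : ℕ) : P t (x t) := by
    induction t with
    | zero => exact h₀
    | succ t ih => exact hnextP t _ ih
  have hcauchy {s t : ℕ} (hst : s ≤ t) : v (x t) - v (x s) ∈ (I ^ s).matrices m n := by
    induction t, hst using Nat.le_induction with
    | base => simp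
    | succ t hst ih =>
      simpa using add_mem (matrices_mono (pow_le_pow_right hst) (hnext t _ (hP t))) ih
  choose L hL using fun i j => IsPrecomplete.prec ‹_› (f := fun t => v (x t) i j)
    fun {s t} hst => by
      rw [SModEq.sub_mem, smul_eq_mul, mul_top]
      simpa using neg_mem (hcauchy hst i j)
  refine ⟨Matrix.of L, fun t => ⟨x t, hP t, fun i j => ?_⟩⟩
  have := hL i j t
  rw [SModEq.sub_mem, smul_eq_mul, mul_top] at this
  simpa using neg_mem this

end Ideal

section Residue

variable {R k : Type*} [CommRing R] [IsLocalRing R] [Field k] {π : R →+* k}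
  {m n : Type*}

theorem map_eq_zero_of_mem_matrices (hker : RingHom.ker π = maximalIdeal R) {X : Matrix m n R}
    (hX : X ∈ (maximalIdeal R).matrices m n) : X.map π = 0 := by
  ext i j
  exact (hker ▸ hX i j : X i j ∈ RingHom.ker π)

theorem map_eq_one_of_sub_one_mem [DecidableEq n] (hker : RingHom.ker π = maximalIdeal R)
    {X : Matrix n n R} (hX : X - 1 ∈ (maximalIdeal R).matrices n n) : X.map π = 1 := by
  have h := map_eq_zero_of_mem_matrices hker hX
  rwa [Matrix.map_sub _ (map_sub π), Matrix.map_one _ π.map_zero π.map_one, sub_eq_zero] at h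

theorem mem_matrices_of_map_eq_zero (hker : RingHom.ker π = maximalIdeal R) {X : Matrix m n R}
    (hX : X.map π = 0) : X ∈ (maximalIdeal R).matrices m n :=
  fun i j => hker ▸ (congr_fun₂ hX i j : π (X i j) = 0)

end Residue

/-- `coord l x` is the `l`-th coordinate of the class of `x ∈ I` in `I/𝔪I ≅ kᵈ`; its values at
`x ∉ I` carry no meaning. -/
structure ResidueCoordinates {R k : Type*} [CommRing R] [IsLocalRing R] [Field k]
    (π : R →+* k) (I : Ideal R) (d : ℕ) where
  coord : Fin d → R → k
  coord_add (l : Fin d) {x y : R} : x ∈ I → y ∈ I → coord l (x + y) = coord l x + coord l y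
  coord_mul (l : Fin d) (r : R) {x : R} : x ∈ I → coord l (r * x) = π r * coord l x
  forall_coord_eq_zero_iff {x : R} : x ∈ I → ((∀ l, coord l x = 0) ↔ x ∈ maximalIdeal R * I)
  exists_coord_eq (c : Fin d → k) : ∃ x ∈ I, ∀ l, coord l x = c l

namespace ResidueCoordinates

variable {R k : Type*} [CommRing R] [IsLocalRing R] [Field k] {π : R →+* k}

theorem exists_nonempty [IsNoetherianRing R] (hπ : Function.Surjective π)
    (hker : RingHom.ker π = maximalIdeal R) (I : Ideal R) :
    ∃ d, Nonempty (ResidueCoordinates π I d) := by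
  classical
  let := Ideal.Quotient.field (maximalIdeal R)
  let e : (R ⧸ maximalIdeal R) ≃+* k :=
    (Ideal.quotEquivOfEq hker.symm).trans (RingHom.quotientKerEquivOfSurjective hπ)
  have he (r : R) : e (Ideal.Quotient.mk _ r) = π r := rfl
  let b := Module.finBasis (R ⧸ maximalIdeal R) (I ⧸ (maximalIdeal R • ⊤ : Submodule R I))
  let q (x : R) (hx : x ∈ I) : I ⧸ (maximalIdeal R • ⊤ : Submodule R I) :=
    Submodule.Quotient.mk ⟨x, hx⟩
  refine ⟨_, ⟨fun l x => if hx : x ∈ I then e (b.repr (q x hx) l) else 0, ?_, ?_, ?_, ?_⟩⟩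
  · intro l x y hx hy
    simp only [dif_pos (add_mem hx hy), dif_pos hx, dif_pos hy, ← map_add, ← Finsupp.add_apply]
    rfl
  · intro l r x hx
    have hq : q (r * x) (I.mul_mem_left r hx) = Ideal.Quotient.mk _ r • q x hx :=
      (Module.Quotient.mk_smul_mk I _ r ⟨x, hx⟩).symm
    simp only [dif_pos (I.mul_mem_left r hx), dif_pos hx, hq, map_smul, Finsupp.smul_apply,
      smul_eq_mul, map_mul, he]
  · intro x hx
    simp only [dif_pos hx, map_eq_zero_iff _ e.injective, ← b.coord_apply]
    rw [b.forall_coord_eq_zero_iff, Submodule.Quotient.mk_eq_zero,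
      Submodule.mem_smul_top_iff, smul_eq_mul]
  · intro c
    obtain ⟨⟨x, hx⟩, hxc⟩ := Submodule.Quotient.mk_surjective _ (b.equivFun.symm (e.symm ∘ c))
    refine ⟨x, hx, fun l => ?_⟩
    simp only [dif_pos hx, q, hxc, ← b.equivFun_apply, b.equivFun.apply_symm_apply]
    exact e.apply_symm_apply (c l)

variable {I : Ideal R} {d : ℕ} (Φ : ResidueCoordinates π I d) (l : Fin d)

theorem coord_zero : Φ.coord l 0 = 0 := by
  simpa using Φ.coord_add l I.zero_mem I.zero_mem

theorem coord_sub {x y : R} (hx : x ∈ I) (hy : y ∈ I) :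
    Φ.coord l (x - y) = Φ.coord l x - Φ.coord l y := by
  rw [eq_sub_iff_add_eq, ← Φ.coord_add l (sub_mem hx hy) hy, sub_add_cancel]

theorem coord_sum {ι : Type*} (s : Finset ι) {f : ι → R} (hf : ∀ u ∈ s, f u ∈ I) :
    Φ.coord l (∑ u ∈ s, f u) = ∑ u ∈ s, Φ.coord l (f u) := by
  classical
  induction s using Finset.induction_on with
  | empty => simpa using Φ.coord_zero l
  | insert u s hu ih =>
    simp only [Finset.mem_insert, forall_eq_or_imp] at hf
    rw [Finset.sum_insert hu, Finset.sum_insert hu,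
      Φ.coord_add l hf.1 (I.sum_mem hf.2), ih hf.2]

theorem coord_eq_of_sub_mem {x y : R} (hx : x ∈ I) (hy : y ∈ I)
    (h : x - y ∈ maximalIdeal R * I) : Φ.coord l x = Φ.coord l y := by
  rw [← sub_eq_zero, ← Φ.coord_sub l hx hy]
  exact (Φ.forall_coord_eq_zero_iff (sub_mem hx hy)).2 h l

variable {m n o : Type*}

theorem map_coord_add {X Y : Matrix m n R} (hX : X ∈ I.matrices m n) (hY : Y ∈ I.matrices m n) :
    (X + Y).map (Φ.coord l) = X.map (Φ.coord l) + Y.map (Φ.coord l) := by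
  ext i j
  exact Φ.coord_add l (hX i j) (hY i j)

theorem map_coord_sub {X Y : Matrix m n R} (hX : X ∈ I.matrices m n) (hY : Y ∈ I.matrices m n) :
    (X - Y).map (Φ.coord l) = X.map (Φ.coord l) - Y.map (Φ.coord l) := by
  ext i j
  exact Φ.coord_sub l (hX i j) (hY i j)

theorem map_coord_mul_left [Fintype m] (A : Matrix o m R) {X : Matrix m n R}
    (hX : X ∈ I.matrices m n) : (A * X).map (Φ.coord l) = A.map π * X.map (Φ.coord l) := by
  ext i j
  simp only [map_apply, mul_apply]
  rw [Φ.coord_sum l _ fun u _ => I.mul_mem_left _ (hX u j)]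
  exact Finset.sum_congr rfl fun u _ => Φ.coord_mul l _ (hX u j)

theorem map_coord_mul_right [Fintype n] {X : Matrix m n R} (hX : X ∈ I.matrices m n)
    (B : Matrix n o R) : (X * B).map (Φ.coord l) = X.map (Φ.coord l) * B.map π := by
  ext i j
  simp only [map_apply, mul_apply]
  rw [Φ.coord_sum l _ fun u _ => I.mul_mem_right _ (hX i u)]
  refine Finset.sum_congr rfl fun u _ => ?_
  rw [mul_comm, Φ.coord_mul l _ (hX i u), mul_comm]

theorem mem_matrices_of_map_coord_eq_zero {X : Matrix m n R} (hX : X ∈ I.matrices m n)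
    (h : ∀ l, X.map (Φ.coord l) = 0) : X ∈ (maximalIdeal R * I).matrices m n :=
  fun i j => (Φ.forall_coord_eq_zero_iff (hX i j)).1 fun l => congr_fun₂ (h l) i j

theorem exists_map_coord_eq (M : Fin d → Matrix m n k) :
    ∃ X ∈ I.matrices m n, ∀ l, X.map (Φ.coord l) = M l := by
  choose X hX hXM using fun i j => Φ.exists_coord_eq fun l => M l i j
  exact ⟨X, hX, fun l => by ext i j; exact hXM i j l⟩

end ResidueCoordinates

section Topology

variable {R X Y : Type*} [TopologicalSpace R] [TopologicalSpace X] {l m : Type*}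

theorem Continuous.matrix_toBlocks₁₁ {f : X → Matrix (l ⊕ m) (l ⊕ m) R}
    (hf : Continuous f) : Continuous fun x => (f x).toBlocks₁₁ :=
  continuous_matrix fun i j => hf.matrix_elem (.inl i) (.inl j)

theorem Continuous.matrix_toBlocks₂₂ {f : X → Matrix (l ⊕ m) (l ⊕ m) R}
    (hf : Continuous f) : Continuous fun x => (f x).toBlocks₂₂ :=
  continuous_matrix fun i j => hf.matrix_elem (.inr i) (.inr j)

variable [CommRing R] [IsTopologicalRing R]

theorem isLocallyConstant_of_sub_mem {J : Ideal R} (hJ : IsOpen (J : Set R)) {f : X → R}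
    (hf : Continuous f) {F : X → Y} (hF : ∀ x y, f x - f y ∈ J → F x = F y) :
    IsLocallyConstant F :=
  (IsLocallyConstant.iff_exists_open F).2 fun x₀ =>
    ⟨(fun x => f x - f x₀) ⁻¹' J, hJ.preimage (hf.sub continuous_const),
      by simp [J.zero_mem], fun x hx => hF x x₀ hx⟩

theorem Continuous.units_conj {n : Type*} [Fintype n] [DecidableEq n] {f : X → GL n R}
    (hf : Continuous fun x => (f x : Matrix n n R)) (C : GL n R) :
    Continuous fun x => ((C * f x * C⁻¹ : GL n R) : Matrix n n R) := by
  simpa only [Units.val_mul] using (continuous_const.matrix_mul hf).matrix_mul continuous_const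

variable [IsLocalRing R] {k : Type*} [Field k] [TopologicalSpace k]
  {π : R →+* k} {n : Type*}

theorem continuous_map_of_ker_eq (hadic : IsAdic (maximalIdeal R))
    (hker : RingHom.ker π = maximalIdeal R) {f : X → Matrix m n R} (hf : Continuous f) :
    Continuous fun x => (f x).map π := by
  have hopen : IsOpen (maximalIdeal R : Set R) := by
    simpa using (isAdic_iff.mp hadic).1 1
  refine continuous_matrix fun i j => IsLocallyConstant.continuous <|
    isLocallyConstant_of_sub_mem hopen (hf.matrix_elem i j) fun x y h => ?_
  rw [← hker, RingHom.mem_ker, map_sub, sub_eq_zero] at h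
  exact h

theorem ResidueCoordinates.continuous_map_coord {I : Ideal R} {d : ℕ}
    (Φ : ResidueCoordinates π I d) (l : Fin d)
    (hI : IsOpen ((maximalIdeal R * I : Ideal R) : Set R))
    {f : X → Matrix m n R} (hf : Continuous f) (hfI : ∀ x, f x ∈ I.matrices m n) :
    Continuous fun x => (f x).map (Φ.coord l) :=
  continuous_matrix fun i j => IsLocallyConstant.continuous <|
    isLocallyConstant_of_sub_mem hI (hf.matrix_elem i j) fun x y h =>
      Φ.coord_eq_of_sub_mem l (hfI x i j) (hfI y i j) h

end Topology

section Cohomology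

variable {G k : Type*} [Group G] [TopologicalSpace G] [Field k] [TopologicalSpace k]
  {a b : Type*} [Fintype a] [DecidableEq a] [Fintype b] [DecidableEq b]

/-- `H¹(G, Hom(σb, σa)) = 0`, where `Hom(σb, σa)` is `Matrix a b k` with `G` acting by
`g • M = σa g * M * (σb g)⁻¹`. -/
def H1Vanishes (σa : G →* GL a k) (σb : G →* GL b k) : Prop :=
  ∀ c : G → Matrix a b k, Continuous c →
    (∀ g h, c (g * h) =
      c g + (σa g : Matrix a a k) * c h * (((σb g)⁻¹ : GL b k) : Matrix b b k)) →
    ∃ M : Matrix a b k, ∀ g,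
      c g = (σa g : Matrix a a k) * M * (((σb g)⁻¹ : GL b k) : Matrix b b k) - M

variable {σa : G →* GL a k} {σb : G →* GL b k}

theorem H1Vanishes.exists_eq_mul_sub_mul [DiscreteTopology k] (h : H1Vanishes σa σb)
    (hσb : Continuous fun g => (σb g : Matrix b b k)) {c : G → Matrix a b k} (hc : Continuous c)
    (hcoc : ∀ g h, c (g * h) = (σa g : Matrix a a k) * c h + c g * (σb h : Matrix b b k)) :
    ∃ M : Matrix a b k, ∀ g, c g = (σa g : Matrix a a k) * M - M * (σb g : Matrix b b k) := by
  have hinv : Continuous fun g => (((σb g)⁻¹ : GL b k) : Matrix b b k) := by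
    simp only [coe_units_inv]
    exact continuous_of_discreteTopology.comp hσb
  obtain ⟨M, hM⟩ := h (fun g => c g * (((σb g)⁻¹ : GL b k) : Matrix b b k))
    (hc.matrix_mul hinv) fun g g' => by
    simp only [hcoc, map_mul, _root_.mul_inv_rev, Units.val_mul, Matrix.add_mul, Matrix.mul_assoc,
      Units.mul_inv_cancel_left]
    abel
  refine ⟨M, fun g => ?_⟩
  have := congr_arg (· * (σb g : Matrix b b k)) (hM g)
  simpa [Matrix.sub_mul, Matrix.mul_assoc] using this

theorem H1Vanishes.exists_coboundary_mod_pow_succ [DiscreteTopology k] {R : Type*} [CommRing R]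
    [IsLocalRing R] [IsNoetherianRing R] [TopologicalSpace R] [IsTopologicalRing R]
    {π : R →+* k} {A : G → Matrix a a R} {D : G → Matrix b b R} (h : H1Vanishes σa σb)
    (hσb : Continuous fun g => (σb g : Matrix b b k)) (hadic : IsAdic (maximalIdeal R))
    (hπ : Function.Surjective π) (hker : RingHom.ker π = maximalIdeal R)
    (hA : ∀ g, (A g).map π = σa g) (hD : ∀ g, (D g).map π = σb g)
    {B : G → Matrix a b R} (hB : Continuous B) {t : ℕ}
    (hBt : ∀ g, B g ∈ (maximalIdeal R ^ t).matrices a b)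
    (hcoc : ∀ g h, B (g * h) = A g * B h + B g * D h) :
    ∃ X ∈ (maximalIdeal R ^ t).matrices a b,
      ∀ g, B g + X * D g - A g * X ∈ (maximalIdeal R ^ (t + 1)).matrices a b := by
  obtain ⟨d, ⟨Φ⟩⟩ := ResidueCoordinates.exists_nonempty hπ hker (maximalIdeal R ^ t)
  have hopen : IsOpen ((maximalIdeal R * maximalIdeal R ^ t : Ideal R) : Set R) := by
    rw [← pow_succ']
    exact (isAdic_iff.mp hadic).1 _
  choose M hM using fun l => h.exists_eq_mul_sub_mul hσb (Φ.continuous_map_coord l hopen hB hBt)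
    fun g g' => by
      rw [hcoc, Φ.map_coord_add l (Ideal.mul_mem_matrices_left _ (hBt g'))
        (Ideal.mul_mem_matrices_right (hBt g) _), Φ.map_coord_mul_left l _ (hBt g'),
        Φ.map_coord_mul_right l (hBt g), hA, hD]
  obtain ⟨X, hX, hXM⟩ := Φ.exists_map_coord_eq M
  refine ⟨X, hX, fun g => ?_⟩
  have hXD := Ideal.mul_mem_matrices_right hX (D g)
  have hAX := Ideal.mul_mem_matrices_left (A g) hX
  rw [pow_succ']
  refine Φ.mem_matrices_of_map_coord_eq_zero (sub_mem (add_mem (hBt g) hXD) hAX) fun l => ?_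
  rw [Φ.map_coord_sub l (add_mem (hBt g) hXD) hAX, Φ.map_coord_add l (hBt g) hXD,
    Φ.map_coord_mul_left l _ hX, Φ.map_coord_mul_right l hX, hA, hD, hXM, hM l g]
  abel

end Cohomology

namespace Matrix

variable {R : Type*} {l m n : Type*}

section Blocks

variable [NonUnitalNonAssocSemiring R] [Fintype l] [Fintype m]

theorem toBlocks₁₁_mul (M N : Matrix (l ⊕ m) (l ⊕ m) R) :
    (M * N).toBlocks₁₁ = M.toBlocks₁₁ * N.toBlocks₁₁ + M.toBlocks₁₂ * N.toBlocks₂₁ := by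
  conv_lhs => rw [← fromBlocks_toBlocks M, ← fromBlocks_toBlocks N, fromBlocks_multiply]
  exact toBlocks_fromBlocks₁₁ ..

theorem toBlocks₁₂_mul (M N : Matrix (l ⊕ m) (l ⊕ m) R) :
    (M * N).toBlocks₁₂ = M.toBlocks₁₁ * N.toBlocks₁₂ + M.toBlocks₁₂ * N.toBlocks₂₂ := by
  conv_lhs => rw [← fromBlocks_toBlocks M, ← fromBlocks_toBlocks N, fromBlocks_multiply]
  exact toBlocks_fromBlocks₁₂ ..

theorem toBlocks₂₁_mul (M N : Matrix (l ⊕ m) (l ⊕ m) R) :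
    (M * N).toBlocks₂₁ = M.toBlocks₂₁ * N.toBlocks₁₁ + M.toBlocks₂₂ * N.toBlocks₂₁ := by
  conv_lhs => rw [← fromBlocks_toBlocks M, ← fromBlocks_toBlocks N, fromBlocks_multiply]
  exact toBlocks_fromBlocks₂₁ ..

theorem toBlocks₂₂_mul (M N : Matrix (l ⊕ m) (l ⊕ m) R) :
    (M * N).toBlocks₂₂ = M.toBlocks₂₁ * N.toBlocks₁₂ + M.toBlocks₂₂ * N.toBlocks₂₂ := by
  conv_lhs => rw [← fromBlocks_toBlocks M, ← fromBlocks_toBlocks N, fromBlocks_multiply]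
  exact toBlocks_fromBlocks₂₂ ..

end Blocks

variable [CommRing R]

def IsBlockDiagMod (J : Ideal R) (M : Matrix (l ⊕ m) (l ⊕ m) R) : Prop :=
  M.toBlocks₁₂ ∈ J.matrices l m ∧ M.toBlocks₂₁ ∈ J.matrices m l

theorem IsBlockDiagMod.of_sub_mem {J : Ideal R} {M M' : Matrix (l ⊕ m) (l ⊕ m) R}
    (h : IsBlockDiagMod J M') (hM : M - M' ∈ J.matrices (l ⊕ m) (l ⊕ m)) :
    IsBlockDiagMod J M :=
  ⟨fun i j => by simpa [toBlocks₁₂] using add_mem (hM (.inl i) (.inr j)) (h.1 i j),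
    fun i j => by simpa [toBlocks₂₁] using add_mem (hM (.inr i) (.inl j)) (h.2 i j)⟩

theorem IsBlockDiagMod.mono {J J' : Ideal R} {M : Matrix (l ⊕ m) (l ⊕ m) R}
    (h : IsBlockDiagMod J M) (hJ : J ≤ J') : IsBlockDiagMod J' M :=
  ⟨Ideal.matrices_mono hJ h.1, Ideal.matrices_mono hJ h.2⟩

theorem isBlockDiagMod_add_commutator_iff [Fintype l] [Fintype m] {J : Ideal R}
    (T : Matrix (l ⊕ m) (l ⊕ m) R) (X : Matrix l m R) (Y : Matrix m l R) :
    IsBlockDiagMod J (T + fromBlocks 0 X Y 0 * T - T * fromBlocks 0 X Y 0) ↔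
      T.toBlocks₁₂ + X * T.toBlocks₂₂ - T.toBlocks₁₁ * X ∈ J.matrices l m ∧
        T.toBlocks₂₁ + Y * T.toBlocks₁₁ - T.toBlocks₂₂ * Y ∈ J.matrices m l := by
  conv_lhs => rw [← fromBlocks_toBlocks T]
  simp [IsBlockDiagMod, fromBlocks_multiply, fromBlocks_add, sub_eq_add_neg, fromBlocks_neg]

section Units

variable [Fintype n] [DecidableEq n] {I J : Ideal R}

theorem isUnit_of_sub_one_mem [IsLocalRing R] {X : Matrix n n R}
    (hX : X - 1 ∈ (maximalIdeal R).matrices n n) : IsUnit X := by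
  rw [isUnit_iff_isUnit_det, ← notMem_maximalIdeal, ← ker_residue, RingHom.mem_ker,
    RingHom.map_det, RingHom.mapMatrix_apply, map_eq_one_of_sub_one_mem ker_residue hX, det_one]
  exact one_ne_zero

theorem coe_units_inv_sub_one_mem {U : GL n R} (hU : (U : Matrix n n R) - 1 ∈ J.matrices n n) :
    ((U⁻¹ : GL n R) : Matrix n n R) - 1 ∈ J.matrices n n := by
  have : ((U⁻¹ : GL n R) : Matrix n n R) - 1 = -((U⁻¹ : GL n R) * ((U : Matrix n n R) - 1)) := by
    rw [Matrix.mul_sub, Units.inv_mul, Matrix.mul_one, neg_sub]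
  rw [this]
  exact neg_mem (Ideal.mul_mem_matrices_left _ hU)

theorem units_conj_sub_conj_mem {U U' : GL n R}
    (hU : (U : Matrix n n R) - U' ∈ J.matrices n n) (T : Matrix n n R) :
    (U : Matrix n n R) * T * (U⁻¹ : GL n R) - U' * T * (U'⁻¹ : GL n R) ∈ J.matrices n n := by
  have hinv : ((U⁻¹ : GL n R) : Matrix n n R) - (U'⁻¹ : GL n R) =
      -((U⁻¹ : GL n R) * ((U : Matrix n n R) - U') * (U'⁻¹ : GL n R)) := by
    rw [Matrix.mul_sub, Matrix.sub_mul, Units.inv_mul, Matrix.mul_assoc, Units.mul_inv,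
      Matrix.one_mul, Matrix.mul_one, neg_sub]
  have : (U : Matrix n n R) * T * (U⁻¹ : GL n R) - U' * T * (U'⁻¹ : GL n R) =
      ((U : Matrix n n R) - U') * T * (U⁻¹ : GL n R) +
        U' * T * (((U⁻¹ : GL n R) : Matrix n n R) - (U'⁻¹ : GL n R)) := by
    simp only [Matrix.sub_mul, Matrix.mul_sub]
    abel
  rw [this, hinv]
  exact add_mem (Ideal.mul_mem_matrices_right (Ideal.mul_mem_matrices_right hU _) _)
    (Ideal.mul_mem_matrices_left _ (neg_mem (Ideal.mul_mem_matrices_right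
      (Ideal.mul_mem_matrices_left _ hU) _)))

theorem map_units_conj_of_sub_one_mem [IsLocalRing R] {k : Type*} [Field k] {π : R →+* k}
    (hker : RingHom.ker π = maximalIdeal R) {C : GL n R}
    (hC : (C : Matrix n n R) - 1 ∈ (maximalIdeal R).matrices n n) (T : Matrix n n R) :
    ((C : Matrix n n R) * T * (C⁻¹ : GL n R)).map π = T.map π := by
  rw [Matrix.map_mul, Matrix.map_mul, map_eq_one_of_sub_one_mem hker hC,
    map_eq_one_of_sub_one_mem hker (coe_units_inv_sub_one_mem hC), Matrix.one_mul,
    Matrix.mul_one]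

theorem units_conj_sub_add_commutator_mem (hIJ : I * I ≤ J) {U : GL n R}
    (hU : (U : Matrix n n R) - 1 ∈ I.matrices n n) (T : Matrix n n R) :
    (U : Matrix n n R) * T * (U⁻¹ : GL n R) -
        (T + ((U : Matrix n n R) - 1) * T - T * ((U : Matrix n n R) - 1)) ∈ J.matrices n n := by
  set N := (U : Matrix n n R) - 1
  set V := ((U⁻¹ : GL n R) : Matrix n n R)
  have hVN : V * N = 1 - V := by
    rw [Matrix.mul_sub, Units.inv_mul, Matrix.mul_one]
  have hVNN : V * N * N = V - 1 + N := by
    rw [hVN, Matrix.sub_mul, Matrix.one_mul, hVN]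
    abel
  have hU' : (U : Matrix n n R) = 1 + N := by simp [N]
  have key : (U : Matrix n n R) * T * V - (T + N * T - T * N) =
      -(N * (T * N)) + (U : Matrix n n R) * T * V * N * N := by
    rw [show (U : Matrix n n R) * T * V * N * N = U * T * (V * N * N) by
      simp only [Matrix.mul_assoc], hVNN, hU']
    noncomm_ring
  rw [key]
  refine Ideal.matrices_mono hIJ (add_mem (neg_mem ?_) ?_)
  · exact Ideal.mul_mem_matrices_mul hU (Ideal.mul_mem_matrices_left T hU)
  · exact Ideal.mul_mem_matrices_mul (Ideal.mul_mem_matrices_left _ hU) hU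

end Units

end Matrix

section Splitting

variable {G R k : Type*} [Group G] [TopologicalSpace G] [CommRing R] [IsLocalRing R]
  [IsNoetherianRing R] [TopologicalSpace R] [IsTopologicalRing R] [Field k] [TopologicalSpace k]
  [DiscreteTopology k] {π : R →+* k}
  {a b : Type*} [Fintype a] [DecidableEq a] [Fintype b] [DecidableEq b]
  {σa : G →* GL a k} {σb : G →* GL b k}

theorem exists_conj_isBlockDiagMod_pow_succ (hadic : IsAdic (maximalIdeal R))
    (hπ : Function.Surjective π) (hker : RingHom.ker π = maximalIdeal R)
    (hab : H1Vanishes σa σb) (hba : H1Vanishes σb σa)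
    (hσa : Continuous fun g => (σa g : Matrix a a k))
    (hσb : Continuous fun g => (σb g : Matrix b b k))
    {τ : G →* GL (a ⊕ b) R} (hτ : Continuous fun g => (τ g : Matrix (a ⊕ b) (a ⊕ b) R))
    (hτπ : ∀ g, (τ g : Matrix (a ⊕ b) (a ⊕ b) R).map π = fromBlocks (σa g) 0 0 (σb g))
    {t : ℕ} (ht : t ≠ 0)
    (hτt : ∀ g, IsBlockDiagMod (maximalIdeal R ^ t) (τ g : Matrix (a ⊕ b) (a ⊕ b) R)) :
    ∃ U : GL (a ⊕ b) R,
      (U : Matrix (a ⊕ b) (a ⊕ b) R) - 1 ∈ (maximalIdeal R ^ t).matrices (a ⊕ b) (a ⊕ b) ∧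
      ∀ g, IsBlockDiagMod (maximalIdeal R ^ (t + 1))
        ((U * τ g * U⁻¹ : GL (a ⊕ b) R) : Matrix (a ⊕ b) (a ⊕ b) R) := by
  let T (g : G) : Matrix (a ⊕ b) (a ⊕ b) R := τ g
  have hT (g h : G) : T (g * h) = T g * T h := by simp [T]
  obtain ⟨X, hX, hXB⟩ := hab.exists_coboundary_mod_pow_succ hσb hadic hπ hker
    (A := fun g => (T g).toBlocks₁₁) (D := fun g => (T g).toBlocks₂₂)
    (B := fun g => (T g).toBlocks₁₂)
    (fun g => congr_arg toBlocks₁₁ (hτπ g)) (fun g => congr_arg toBlocks₂₂ (hτπ g))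
    (continuous_matrix fun i j => hτ.matrix_elem (.inl i) (.inr j)) (fun g => (hτt g).1)
    fun g h => by simp only [hT, toBlocks₁₂_mul]
  obtain ⟨Y, hY, hYC⟩ := hba.exists_coboundary_mod_pow_succ hσa hadic hπ hker
    (A := fun g => (T g).toBlocks₂₂) (D := fun g => (T g).toBlocks₁₁)
    (B := fun g => (T g).toBlocks₂₁)
    (fun g => congr_arg toBlocks₂₂ (hτπ g)) (fun g => congr_arg toBlocks₁₁ (hτπ g))
    (continuous_matrix fun i j => hτ.matrix_elem (.inr i) (.inl j)) (fun g => (hτt g).2)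
    fun g h => by simp only [hT, toBlocks₂₁_mul, add_comm]
  have hN : fromBlocks 0 X Y 0 ∈ (maximalIdeal R ^ t).matrices (a ⊕ b) (a ⊕ b) := by
    rintro (i | i) (j | j) <;> simp only [fromBlocks_apply₁₁, fromBlocks_apply₁₂,
      fromBlocks_apply₂₁, fromBlocks_apply₂₂, Matrix.zero_apply]
    exacts [zero_mem _, hX i j, hY i j, zero_mem _]
  have hU : IsUnit (1 + fromBlocks 0 X Y 0) :=
    isUnit_of_sub_one_mem (by simpa using Ideal.matrices_mono (Ideal.pow_le_self ht) hN)
  have hU1 : (hU.unit : Matrix (a ⊕ b) (a ⊕ b) R) - 1 = fromBlocks 0 X Y 0 := by simp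
  refine ⟨hU.unit, hU1.symm ▸ hN, fun g => ?_⟩
  have hsq : maximalIdeal R ^ t * maximalIdeal R ^ t ≤ maximalIdeal R ^ (t + 1) := by
    rw [← pow_add]
    exact Ideal.pow_le_pow_right (by omega)
  refine IsBlockDiagMod.of_sub_mem ?_ (units_conj_sub_add_commutator_mem hsq (hU1.symm ▸ hN) (T g))
  rw [hU1, isBlockDiagMod_add_commutator_iff]
  exact ⟨hXB g, hYC g⟩

theorem exists_conj_sub_mem_isBlockDiagMod_pow_succ (hadic : IsAdic (maximalIdeal R))
    (hπ : Function.Surjective π) (hker : RingHom.ker π = maximalIdeal R)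
    (hab : H1Vanishes σa σb) (hba : H1Vanishes σb σa)
    (hσa : Continuous fun g => (σa g : Matrix a a k))
    (hσb : Continuous fun g => (σb g : Matrix b b k))
    {ρ : G →* GL (a ⊕ b) R} (hρ : Continuous fun g => (ρ g : Matrix (a ⊕ b) (a ⊕ b) R))
    (hρπ : ∀ g, (ρ g : Matrix (a ⊕ b) (a ⊕ b) R).map π = fromBlocks (σa g) 0 0 (σb g))
    {C : GL (a ⊕ b) R}
    (hC : (C : Matrix (a ⊕ b) (a ⊕ b) R) - 1 ∈ (maximalIdeal R).matrices (a ⊕ b) (a ⊕ b))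
    {t : ℕ} (ht : t ≠ 0) (hCt : ∀ g, IsBlockDiagMod (maximalIdeal R ^ t)
      ((C * ρ g * C⁻¹ : GL (a ⊕ b) R) : Matrix (a ⊕ b) (a ⊕ b) R)) :
    ∃ C' : GL (a ⊕ b) R,
      (C' : Matrix (a ⊕ b) (a ⊕ b) R) - C ∈ (maximalIdeal R ^ t).matrices (a ⊕ b) (a ⊕ b) ∧
      ∀ g, IsBlockDiagMod (maximalIdeal R ^ (t + 1))
        ((C' * ρ g * C'⁻¹ : GL (a ⊕ b) R) : Matrix (a ⊕ b) (a ⊕ b) R) := by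
  obtain ⟨U, hU1, hU⟩ := exists_conj_isBlockDiagMod_pow_succ
    (τ := (MulAut.conj C).toMonoidHom.comp ρ) hadic hπ hker hab hba hσa hσb (hρ.units_conj C)
    (fun g => (map_units_conj_of_sub_one_mem hker hC _).trans (hρπ g)) ht hCt
  refine ⟨U * C, ?_, fun g => by simpa [mul_assoc] using hU g⟩
  rw [Units.val_mul, ← Matrix.one_mul (C : Matrix (a ⊕ b) (a ⊕ b) R), ← Matrix.mul_assoc,
    Matrix.mul_one, ← Matrix.sub_mul]
  exact Ideal.mul_mem_matrices_right hU1 _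

theorem exists_conj_offDiag_eq_zero [IsAdicComplete (maximalIdeal R) R]
    (hadic : IsAdic (maximalIdeal R))
    (hπ : Function.Surjective π) (hker : RingHom.ker π = maximalIdeal R)
    (hab : H1Vanishes σa σb) (hba : H1Vanishes σb σa)
    (hσa : Continuous fun g => (σa g : Matrix a a k))
    (hσb : Continuous fun g => (σb g : Matrix b b k))
    {ρ : G →* GL (a ⊕ b) R} (hρ : Continuous fun g => (ρ g : Matrix (a ⊕ b) (a ⊕ b) R))
    (hρπ : ∀ g, (ρ g : Matrix (a ⊕ b) (a ⊕ b) R).map π = fromBlocks (σa g) 0 0 (σb g)) :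
    ∃ C : GL (a ⊕ b) R,
      (C : Matrix (a ⊕ b) (a ⊕ b) R) - 1 ∈ (maximalIdeal R).matrices (a ⊕ b) (a ⊕ b) ∧
      ∀ g, ((C * ρ g * C⁻¹ : GL (a ⊕ b) R) : Matrix (a ⊕ b) (a ⊕ b) R).toBlocks₁₂ = 0 ∧
        ((C * ρ g * C⁻¹ : GL (a ⊕ b) R) : Matrix (a ⊕ b) (a ⊕ b) R).toBlocks₂₁ = 0 := by
  let P (t : ℕ) (C : GL (a ⊕ b) R) : Prop :=
    (C : Matrix (a ⊕ b) (a ⊕ b) R) - 1 ∈ (maximalIdeal R).matrices (a ⊕ b) (a ⊕ b) ∧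
      ∀ g, IsBlockDiagMod (maximalIdeal R ^ (t + 1))
        ((C * ρ g * C⁻¹ : GL (a ⊕ b) R) : Matrix (a ⊕ b) (a ⊕ b) R)
  have h₀ : P 0 1 := by
    refine ⟨by simp [zero_mem], fun g => ?_⟩
    simp only [one_mul, inv_one, mul_one, zero_add, pow_one]
    exact ⟨mem_matrices_of_map_eq_zero hker (congr_arg toBlocks₁₂ (hρπ g)),
      mem_matrices_of_map_eq_zero hker (congr_arg toBlocks₂₁ (hρπ g))⟩
  have hstep (t : ℕ) (C : GL (a ⊕ b) R) (hC : P t C) : ∃ C', P (t + 1) C' ∧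
      (C' : Matrix (a ⊕ b) (a ⊕ b) R) - C ∈ (maximalIdeal R ^ t).matrices (a ⊕ b) (a ⊕ b) := by
    obtain ⟨C', hC'C, hC'⟩ := exists_conj_sub_mem_isBlockDiagMod_pow_succ hadic hπ hker hab hba
      hσa hσb hρ hρπ hC.1 t.succ_ne_zero hC.2
    refine ⟨C', ⟨?_, hC'⟩, Ideal.matrices_mono (Ideal.pow_le_pow_right t.le_succ) hC'C⟩
    rw [← sub_add_sub_cancel _ (C : Matrix (a ⊕ b) (a ⊕ b) R)]
    exact add_mem (Ideal.matrices_mono (Ideal.pow_le_self t.succ_ne_zero) hC'C) hC.1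
  obtain ⟨L, hL⟩ := Ideal.exists_matrix_limit_of_approx (I := maximalIdeal R)
    (fun C : GL (a ⊕ b) R => (C : Matrix (a ⊕ b) (a ⊕ b) R)) P h₀ hstep
  obtain ⟨C₁, hC₁, hLC₁⟩ := hL 1
  have hL1 : L - 1 ∈ (maximalIdeal R).matrices (a ⊕ b) (a ⊕ b) := by
    rw [← sub_add_sub_cancel _ (C₁ : Matrix (a ⊕ b) (a ⊕ b) R)]
    exact add_mem (pow_one (maximalIdeal R) ▸ hLC₁) hC₁.1
  let Lu := (isUnit_of_sub_one_mem hL1).unit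
  have hdiag (g : G) (t : ℕ) : IsBlockDiagMod (maximalIdeal R ^ t)
      ((Lu * ρ g * Lu⁻¹ : GL (a ⊕ b) R) : Matrix (a ⊕ b) (a ⊕ b) R) := by
    obtain ⟨C, hC, hLC⟩ := hL t
    simpa using ((hC.2 g).mono (Ideal.pow_le_pow_right t.le_succ)).of_sub_mem
      (units_conj_sub_conj_mem (U := Lu) hLC (ρ g))
  exact ⟨Lu, hL1, fun g => ⟨Ideal.eq_zero_of_forall_mem_pow_matrices fun t => (hdiag g t).1,
    Ideal.eq_zero_of_forall_mem_pow_matrices fun t => (hdiag g t).2⟩⟩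

end Splitting

namespace MonoidHom

variable {G R : Type*} [Group G] [CommRing R]
  {a b : Type*} [Fintype a] [DecidableEq a] [Fintype b] [DecidableEq b]
  (τ : G →* GL (a ⊕ b) R) (h : ∀ g, (τ g : Matrix (a ⊕ b) (a ⊕ b) R).toBlocks₁₂ = 0)

def toBlocks₁₁ : G →* GL a R :=
  MonoidHom.toHomUnits
    { toFun g := (τ g : Matrix (a ⊕ b) (a ⊕ b) R).toBlocks₁₁
      map_one' := by simp [← fromBlocks_one]
      map_mul' g g' := by simp [toBlocks₁₁_mul, h] }

def toBlocks₂₂ : G →* GL b R :=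
  MonoidHom.toHomUnits
    { toFun g := (τ g : Matrix (a ⊕ b) (a ⊕ b) R).toBlocks₂₂
      map_one' := by simp [← fromBlocks_one]
      map_mul' g g' := by simp [toBlocks₂₂_mul, h] }

@[simp]
theorem coe_toBlocks₁₁_apply (g : G) :
    (τ.toBlocks₁₁ h g : Matrix a a R) = (τ g : Matrix (a ⊕ b) (a ⊕ b) R).toBlocks₁₁ := rfl

@[simp]
theorem coe_toBlocks₂₂_apply (g : G) :
    (τ.toBlocks₂₂ h g : Matrix b b R) = (τ g : Matrix (a ⊕ b) (a ⊕ b) R).toBlocks₂₂ := rfl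

end MonoidHom

theorem exists_conj_eq_of_mul_eq {G R : Type*} [Group G] [CommRing R] [IsLocalRing R]
    {n : Type*} [Fintype n] [DecidableEq n] {σ σ' : G →* GL n R} {P : Matrix n n R}
    (hP : P - 1 ∈ (maximalIdeal R).matrices n n) (h : ∀ g, P * σ g = σ' g * P) :
    ∃ C : GL n R, (∀ i j, ((C : Matrix n n R) - 1) i j ∈ maximalIdeal R) ∧
      ∀ g, C * σ g * C⁻¹ = σ' g :=
  ⟨(isUnit_of_sub_one_mem hP).unit, hP, fun g => Units.ext <| by
    rw [Units.val_mul, Units.val_mul, IsUnit.unit_spec, h g, Matrix.mul_assoc, IsUnit.mul_val_inv,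
      Matrix.mul_one]⟩

theorem exists_conj_of_conj_fromBlocks_eq {G R : Type*} [Group G] [CommRing R] [IsLocalRing R]
    {a b : Type*} [Fintype a] [DecidableEq a] [Fintype b] [DecidableEq b]
    {σ₁ σ₁' : G →* GL a R} {σ₂ σ₂' : G →* GL b R} {C C' : GL (a ⊕ b) R}
    (hC : (C : Matrix (a ⊕ b) (a ⊕ b) R) - 1 ∈ (maximalIdeal R).matrices (a ⊕ b) (a ⊕ b))
    (hC' : (C' : Matrix (a ⊕ b) (a ⊕ b) R) - 1 ∈ (maximalIdeal R).matrices (a ⊕ b) (a ⊕ b))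
    (h : ∀ g, (C : Matrix (a ⊕ b) (a ⊕ b) R) * fromBlocks (σ₁ g : Matrix a a R) 0 0
        (σ₂ g : Matrix b b R) * ((C⁻¹ : GL (a ⊕ b) R) : Matrix (a ⊕ b) (a ⊕ b) R) =
      (C' : Matrix (a ⊕ b) (a ⊕ b) R) * fromBlocks (σ₁' g : Matrix a a R) 0 0
        (σ₂' g : Matrix b b R) * ((C'⁻¹ : GL (a ⊕ b) R) : Matrix (a ⊕ b) (a ⊕ b) R)) :
    (∃ C₁ : GL a R, (∀ i j, ((C₁ : Matrix a a R) - 1) i j ∈ maximalIdeal R) ∧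
      ∀ g, C₁ * σ₁ g * C₁⁻¹ = σ₁' g) ∧
    (∃ C₂ : GL b R, (∀ i j, ((C₂ : Matrix b b R) - 1) i j ∈ maximalIdeal R) ∧
      ∀ g, C₂ * σ₂ g * C₂⁻¹ = σ₂' g) := by
  set c : Matrix (a ⊕ b) (a ⊕ b) R := ↑C
  set ci : Matrix (a ⊕ b) (a ⊕ b) R := ↑(C⁻¹ : GL (a ⊕ b) R)
  set c' : Matrix (a ⊕ b) (a ⊕ b) R := ↑C'
  set ci' : Matrix (a ⊕ b) (a ⊕ b) R := ↑(C'⁻¹ : GL (a ⊕ b) R)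
  have hcic : ci * c = 1 := Units.inv_mul C
  have hcic' : ci' * c' = 1 := Units.inv_mul C'
  have hE1 : ci' * c - 1 ∈ (maximalIdeal R).matrices (a ⊕ b) (a ⊕ b) := by
    rw [show ci' * c - 1 = ci' * (c - 1) + (ci' - 1) by noncomm_ring]
    exact add_mem (Ideal.mul_mem_matrices_left _ hC) (coe_units_inv_sub_one_mem hC')
  have hE (g : G) : ci' * c * fromBlocks (σ₁ g : Matrix a a R) 0 0 (σ₂ g : Matrix b b R) =
      fromBlocks (σ₁' g : Matrix a a R) 0 0 (σ₂' g : Matrix b b R) * (ci' * c) := by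
    calc ci' * c * fromBlocks (σ₁ g : Matrix a a R) 0 0 (σ₂ g : Matrix b b R)
        = ci' * (c * fromBlocks (σ₁ g : Matrix a a R) 0 0 (σ₂ g : Matrix b b R) * ci) * c := by
          simp only [Matrix.mul_assoc, hcic, Matrix.mul_one]
      _ = ci' * (c' * fromBlocks (σ₁' g : Matrix a a R) 0 0 (σ₂' g : Matrix b b R) * ci') * c := by
          rw [h g]
      _ = fromBlocks (σ₁' g : Matrix a a R) 0 0 (σ₂' g : Matrix b b R) * (ci' * c) := by
          simp only [← Matrix.mul_assoc, hcic', Matrix.one_mul]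
  set E := ci' * c
  exact ⟨exists_conj_eq_of_mul_eq (P := E.toBlocks₁₁)
      (fun i j => by simpa [toBlocks₁₁, one_apply] using hE1 (.inl i) (.inl j))
      fun g => by simpa [toBlocks₁₁_mul] using congr_arg toBlocks₁₁ (hE g),
    exists_conj_eq_of_mul_eq (P := E.toBlocks₂₂)
      (fun i j => by simpa [toBlocks₂₂, one_apply] using hE1 (.inr i) (.inr j))
      fun g => by simpa [toBlocks₂₂_mul] using congr_arg toBlocks₂₂ (hE g)⟩

section Existence

variable {G R k : Type*} [Group G] [TopologicalSpace G] [CommRing R] [IsLocalRing R]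
  [IsNoetherianRing R] [TopologicalSpace R] [IsTopologicalRing R] [Field k] [TopologicalSpace k]
  [DiscreteTopology k] {π : R →+* k} {n₁ n₂ : ℕ}
  {σb₁ : G →* GL (Fin n₁) k} {σb₂ : G →* GL (Fin n₂) k}

theorem exists_isSplitLift [IsAdicComplete (maximalIdeal R) R] (hadic : IsAdic (maximalIdeal R))
    (hπ : Function.Surjective π) (hker : RingHom.ker π = maximalIdeal R)
    (h₁₂ : H1Vanishes σb₁ σb₂) (h₂₁ : H1Vanishes σb₂ σb₁) {ρ : G →* GL (Fin n₁ ⊕ Fin n₂) R}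
    (hρ : Continuous fun g => (ρ g : Matrix (Fin n₁ ⊕ Fin n₂) (Fin n₁ ⊕ Fin n₂) R))
    (hρπ : ∀ g, (ρ g : Matrix (Fin n₁ ⊕ Fin n₂) (Fin n₁ ⊕ Fin n₂) R).map π =
      fromBlocks (σb₁ g) 0 0 (σb₂ g)) :
    ∃ σ₁ σ₂, IsSplitLift π σb₁ σb₂ ρ σ₁ σ₂ := by
  have hρ' := continuous_map_of_ker_eq hadic hker hρ
  have hσ₁ : Continuous fun g => (σb₁ g : Matrix (Fin n₁) (Fin n₁) k) := by
    simpa [hρπ] using hρ'.matrix_toBlocks₁₁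
  have hσ₂ : Continuous fun g => (σb₂ g : Matrix (Fin n₂) (Fin n₂) k) := by
    simpa [hρπ] using hρ'.matrix_toBlocks₂₂
  obtain ⟨C, hC1, hC⟩ := exists_conj_offDiag_eq_zero hadic hπ hker h₁₂ h₂₁ hσ₁ hσ₂ hρ hρπ
  let τ := (MulAut.conj C).toMonoidHom.comp ρ
  have hτg (g : G) : (τ g : Matrix (Fin n₁ ⊕ Fin n₂) (Fin n₁ ⊕ Fin n₂) R) =
      C * ρ g * (C⁻¹ : GL (Fin n₁ ⊕ Fin n₂) R) := rfl
  have hτπ (g : G) : (τ g : Matrix (Fin n₁ ⊕ Fin n₂) (Fin n₁ ⊕ Fin n₂) R).map π =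
      fromBlocks (σb₁ g) 0 0 (σb₂ g) :=
    (map_units_conj_of_sub_one_mem hker hC1 _).trans (hρπ g)
  have hτ0 (g : G) : (τ g : Matrix (Fin n₁ ⊕ Fin n₂) (Fin n₁ ⊕ Fin n₂) R).toBlocks₁₂ = 0 ∧
      (τ g : Matrix (Fin n₁ ⊕ Fin n₂) (Fin n₁ ⊕ Fin n₂) R).toBlocks₂₁ = 0 := hC g
  refine ⟨τ.toBlocks₁₁ fun g => (hτ0 g).1, τ.toBlocks₂₂ fun g => (hτ0 g).1,
    (hρ.units_conj C).matrix_toBlocks₁₁, (hρ.units_conj C).matrix_toBlocks₂₂,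
    fun g => (congr_arg toBlocks₁₁ (hτπ g)).trans (toBlocks_fromBlocks₁₁ ..),
    fun g => (congr_arg toBlocks₂₂ (hτπ g)).trans (toBlocks_fromBlocks₂₂ ..),
    C⁻¹, coe_units_inv_sub_one_mem hC1, fun g => ?_⟩
  have hτblocks : fromBlocks (τ g : Matrix (Fin n₁ ⊕ Fin n₂) (Fin n₁ ⊕ Fin n₂) R).toBlocks₁₁ 0 0
      (τ g : Matrix (Fin n₁ ⊕ Fin n₂) (Fin n₁ ⊕ Fin n₂) R).toBlocks₂₂ = τ g := by
    conv_rhs => rw [← fromBlocks_toBlocks (τ g : Matrix (Fin n₁ ⊕ Fin n₂) (Fin n₁ ⊕ Fin n₂) R)]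
    rw [(hτ0 g).1, (hτ0 g).2]
  rw [MonoidHom.coe_toBlocks₁₁_apply, MonoidHom.coe_toBlocks₂₂_apply, hτblocks, hτg, inv_inv]
  simp only [Matrix.mul_assoc, Units.inv_mul, Matrix.mul_one, Units.inv_mul_cancel_left]

end Existence

theorem stmt_7_general
    (G : Type*) [Group G] [TopologicalSpace G]
    (k : Type*) [Field k] [TopologicalSpace k] [DiscreteTopology k]
    (n₁ n₂ : ℕ)
    (σb₁ : G →* Matrix.GeneralLinearGroup (Fin n₁) k)
    (σb₂ : G →* Matrix.GeneralLinearGroup (Fin n₂) k)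
    (ρb : G →* Matrix.GeneralLinearGroup (Fin n₁ ⊕ Fin n₂) k)
    (hρb : ∀ g, (ρb g : Matrix (Fin n₁ ⊕ Fin n₂) (Fin n₁ ⊕ Fin n₂) k) =
      Matrix.fromBlocks ((σb₁ g : Matrix (Fin n₁) (Fin n₁) k)) 0 0
        ((σb₂ g : Matrix (Fin n₂) (Fin n₂) k)))
    -- vanishing of H¹(G, Hom(σ̄₁, σ̄₂)) and H¹(G, Hom(σ̄₂, σ̄₁)): every continuous cocycle
    -- is a coboundary
    (hH1a : ∀ c : G → Matrix (Fin n₂) (Fin n₁) k, Continuous c →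
      (∀ g h, c (g * h) = c g + (σb₂ g : Matrix (Fin n₂) (Fin n₂) k) * c h *
        (((σb₁ g)⁻¹ : Matrix.GeneralLinearGroup (Fin n₁) k) : Matrix (Fin n₁) (Fin n₁) k)) →
      ∃ M : Matrix (Fin n₂) (Fin n₁) k, ∀ g,
        c g = (σb₂ g : Matrix (Fin n₂) (Fin n₂) k) * M *
          (((σb₁ g)⁻¹ : Matrix.GeneralLinearGroup (Fin n₁) k) :
            Matrix (Fin n₁) (Fin n₁) k) - M)
    (hH1b : ∀ c : G → Matrix (Fin n₁) (Fin n₂) k, Continuous c →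
      (∀ g h, c (g * h) = c g + (σb₁ g : Matrix (Fin n₁) (Fin n₁) k) * c h *
        (((σb₂ g)⁻¹ : Matrix.GeneralLinearGroup (Fin n₂) k) : Matrix (Fin n₂) (Fin n₂) k)) →
      ∃ M : Matrix (Fin n₁) (Fin n₂) k, ∀ g,
        c g = (σb₁ g : Matrix (Fin n₁) (Fin n₁) k) * M *
          (((σb₂ g)⁻¹ : Matrix.GeneralLinearGroup (Fin n₂) k) :
            Matrix (Fin n₂) (Fin n₂) k) - M)
    -- `R` a complete Noetherian local ring with residue field `k`, with the adic topology
    (R : Type*) [CommRing R] [IsLocalRing R] [IsNoetherianRing R]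
    [IsAdicComplete (IsLocalRing.maximalIdeal R) R]
    [TopologicalSpace R] [IsTopologicalRing R]
    (hadic : IsAdic (IsLocalRing.maximalIdeal R))
    (π : R →+* k) (hπsurj : Function.Surjective π)
    (hπker : RingHom.ker π = IsLocalRing.maximalIdeal R)
    -- a continuous lift of `ρ̄`
    (ρ : G →* Matrix.GeneralLinearGroup (Fin n₁ ⊕ Fin n₂) R)
    (hρcont : Continuous (fun g => (ρ g : Matrix (Fin n₁ ⊕ Fin n₂) (Fin n₁ ⊕ Fin n₂) R)))
    (hρlift : ∀ g, ((ρ g : Matrix (Fin n₁ ⊕ Fin n₂) (Fin n₁ ⊕ Fin n₂) R)).map π =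
      (ρb g : Matrix (Fin n₁ ⊕ Fin n₂) (Fin n₁ ⊕ Fin n₂) k)) :
    (∃ σ₁ σ₂, IsSplitLift π σb₁ σb₂ ρ σ₁ σ₂) ∧
    (∀ σ₁ σ₂ σ₁' σ₂', IsSplitLift π σb₁ σb₂ ρ σ₁ σ₂ → IsSplitLift π σb₁ σb₂ ρ σ₁' σ₂' →
      (∃ C₁ : Matrix.GeneralLinearGroup (Fin n₁) R,
        (∀ i j, ((C₁ : Matrix (Fin n₁) (Fin n₁) R) - 1) i j ∈ IsLocalRing.maximalIdeal R) ∧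
        ∀ g, C₁ * σ₁ g * C₁⁻¹ = σ₁' g) ∧
      (∃ C₂ : Matrix.GeneralLinearGroup (Fin n₂) R,
        (∀ i j, ((C₂ : Matrix (Fin n₂) (Fin n₂) R) - 1) i j ∈ IsLocalRing.maximalIdeal R) ∧
        ∀ g, C₂ * σ₂ g * C₂⁻¹ = σ₂' g)) := by
  refine ⟨exists_isSplitLift hadic hπsurj hπker hH1b hH1a hρcont
    fun g => (hρlift g).trans (hρb g), fun σ₁ σ₂ σ₁' σ₂' h h' => ?_⟩
  obtain ⟨-, -, -, -, C, hC, hCρ⟩ := h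
  obtain ⟨-, -, -, -, C', hC', hC'ρ⟩ := h'
  exact exists_conj_of_conj_fromBlocks_eq hC hC' fun g => (hCρ g).trans (hC'ρ g).symm

/-- Let `G` be a profinite group, `L` a closed normal subgroup, and
`ρ̄ : G → GLₙ(k)` a continuous representation over a finite field `k` of characteristic `p`,
decomposing as `ρ̄ = σ̄₁ ⊕ σ̄₂` of dimensions `n₁, n₂`.  Suppose `H⁰` and `H¹` of `G` with
coefficients in `Hom(σ̄₁, σ̄₂)` and in `Hom(σ̄₂, σ̄₁)` all vanish (expressed concretely by the
vanishing of invariants and the triviality of continuous cocycles below).  Then for any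
complete Noetherian local ring `R` with residue field `k` (with its `m_R`-adic topology) and
any continuous lift `ρ : G → GLₙ(R)` of `ρ̄`, there exist continuous lifts
`σᵢ : G → GL_{nᵢ}(R)` of `σ̄ᵢ` such that `σ₁ ⊕ σ₂` is conjugate to `ρ` by an element of
`1 + Mₙ(m_R)`, and each `σᵢ` is unique up to conjugation by `1 + M_{nᵢ}(m_R)`. -/
theorem stmt_7
    (G : Type*) [Group G] [TopologicalSpace G] [IsTopologicalGroup G]
    [CompactSpace G] [TotallyDisconnectedSpace G] [T2Space G]
    (L : Subgroup G) (hLnormal : L.Normal) (hLclosed : IsClosed (L : Set G))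
    (p : ℕ) (hp : p.Prime)
    (k : Type*) [Field k] [Fintype k] [TopologicalSpace k] [DiscreteTopology k]
    (hchar : CharP k p)
    (n₁ n₂ : ℕ)
    (σb₁ : G →* Matrix.GeneralLinearGroup (Fin n₁) k)
    (σb₂ : G →* Matrix.GeneralLinearGroup (Fin n₂) k)
    (ρb : G →* Matrix.GeneralLinearGroup (Fin n₁ ⊕ Fin n₂) k)
    (hρb : ∀ g, (ρb g : Matrix (Fin n₁ ⊕ Fin n₂) (Fin n₁ ⊕ Fin n₂) k) =
      Matrix.fromBlocks ((σb₁ g : Matrix (Fin n₁) (Fin n₁) k)) 0 0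
        ((σb₂ g : Matrix (Fin n₂) (Fin n₂) k)))
    (hρbcont : Continuous (fun g => (ρb g : Matrix (Fin n₁ ⊕ Fin n₂) (Fin n₁ ⊕ Fin n₂) k)))
    -- vanishing of H⁰(G, Hom(σ̄₁, σ̄₂)) and H⁰(G, Hom(σ̄₂, σ̄₁))
    (hH0a : ∀ M : Matrix (Fin n₂) (Fin n₁) k,
      (∀ g, (σb₂ g : Matrix (Fin n₂) (Fin n₂) k) * M =
        M * (σb₁ g : Matrix (Fin n₁) (Fin n₁) k)) → M = 0)
    (hH0b : ∀ M : Matrix (Fin n₁) (Fin n₂) k,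
      (∀ g, (σb₁ g : Matrix (Fin n₁) (Fin n₁) k) * M =
        M * (σb₂ g : Matrix (Fin n₂) (Fin n₂) k)) → M = 0)
    -- vanishing of H¹(G, Hom(σ̄₁, σ̄₂)) and H¹(G, Hom(σ̄₂, σ̄₁)): every continuous cocycle
    -- is a coboundary
    (hH1a : ∀ c : G → Matrix (Fin n₂) (Fin n₁) k, Continuous c →
      (∀ g h, c (g * h) = c g + (σb₂ g : Matrix (Fin n₂) (Fin n₂) k) * c h *
        (((σb₁ g)⁻¹ : Matrix.GeneralLinearGroup (Fin n₁) k) : Matrix (Fin n₁) (Fin n₁) k)) →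
      ∃ M : Matrix (Fin n₂) (Fin n₁) k, ∀ g,
        c g = (σb₂ g : Matrix (Fin n₂) (Fin n₂) k) * M *
          (((σb₁ g)⁻¹ : Matrix.GeneralLinearGroup (Fin n₁) k) :
            Matrix (Fin n₁) (Fin n₁) k) - M)
    (hH1b : ∀ c : G → Matrix (Fin n₁) (Fin n₂) k, Continuous c →
      (∀ g h, c (g * h) = c g + (σb₁ g : Matrix (Fin n₁) (Fin n₁) k) * c h *
        (((σb₂ g)⁻¹ : Matrix.GeneralLinearGroup (Fin n₂) k) : Matrix (Fin n₂) (Fin n₂) k)) →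
      ∃ M : Matrix (Fin n₁) (Fin n₂) k, ∀ g,
        c g = (σb₁ g : Matrix (Fin n₁) (Fin n₁) k) * M *
          (((σb₂ g)⁻¹ : Matrix.GeneralLinearGroup (Fin n₂) k) :
            Matrix (Fin n₂) (Fin n₂) k) - M)
    -- `R` a complete Noetherian local ring with residue field `k`, with the adic topology
    (R : Type*) [CommRing R] [IsLocalRing R] [IsNoetherianRing R]
    [IsAdicComplete (IsLocalRing.maximalIdeal R) R]
    [TopologicalSpace R] [IsTopologicalRing R]
    (hadic : IsAdic (IsLocalRing.maximalIdeal R))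
    (π : R →+* k) (hπsurj : Function.Surjective π)
    (hπker : RingHom.ker π = IsLocalRing.maximalIdeal R)
    -- a continuous lift of `ρ̄`
    (ρ : G →* Matrix.GeneralLinearGroup (Fin n₁ ⊕ Fin n₂) R)
    (hρcont : Continuous (fun g => (ρ g : Matrix (Fin n₁ ⊕ Fin n₂) (Fin n₁ ⊕ Fin n₂) R)))
    (hρlift : ∀ g, ((ρ g : Matrix (Fin n₁ ⊕ Fin n₂) (Fin n₁ ⊕ Fin n₂) R)).map π =
      (ρb g : Matrix (Fin n₁ ⊕ Fin n₂) (Fin n₁ ⊕ Fin n₂) k)) :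
    (∃ σ₁ σ₂, IsSplitLift π σb₁ σb₂ ρ σ₁ σ₂) ∧
    (∀ σ₁ σ₂ σ₁' σ₂', IsSplitLift π σb₁ σb₂ ρ σ₁ σ₂ → IsSplitLift π σb₁ σb₂ ρ σ₁' σ₂' →
      (∃ C₁ : Matrix.GeneralLinearGroup (Fin n₁) R,
        (∀ i j, ((C₁ : Matrix (Fin n₁) (Fin n₁) R) - 1) i j ∈ IsLocalRing.maximalIdeal R) ∧
        ∀ g, C₁ * σ₁ g * C₁⁻¹ = σ₁' g) ∧
      (∃ C₂ : Matrix.GeneralLinearGroup (Fin n₂) R,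
        (∀ i j, ((C₂ : Matrix (Fin n₂) (Fin n₂) R) - 1) i j ∈ IsLocalRing.maximalIdeal R) ∧
        ∀ g, C₂ * σ₂ g * C₂⁻¹ = σ₂' g)) :=
  stmt_7_general G k n₁ n₂ σb₁ σb₂ ρb hρb hH1a hH1b R hadic π hπsurj hπker ρ hρcont hρlift
end

section
/- Let n ≥ 3 and p ≡ 1 (mod 48·n!). Let z ∈ F_pˣ be an element of order 96k where n = 2k+1, and set x₁ = z^{1+8k}, y₁ = z^{16k}. Then: y₁ is a primitive 6th root of unity; x₁^{16k} = y₁^{1+8k}; the ratio x₁⁸/y₁⁴ = z⁸ is a primitive 12k-th root of unity; and for all 1 ≤ i ≤ 2k−2, (y₁⁸/x₁^{16})^i ∉ {y₁², y₁⁻²}. -/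
/-!
Everything is a power of `z`: `y₁ = z^{16k}` and `x₁⁸/y₁⁴ = z⁸` have orders `96k/16k = 6` and
`96k/8 = 12k`, while `w = y₁⁸/x₁¹⁶ = z^{-16}` has order `6k` and `y₁^{±2} = w^{∓2k}`. Thus
`w^i = y₁^{±2}` would force `6k ∣ i ± 2k`, impossible since `0 < |i ± 2k| < 6k` for `1 ≤ i ≤ 2k - 2`.
-/

theorem orderOf_pow_of_orderOf_eq_mul {M : Type*} [Monoid M] {z : M} {m d : ℕ} (hd : d ≠ 0)
    (h : orderOf z = m * d) : orderOf (z ^ d) = m := by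
  rw [orderOf_pow_of_dvd hd (h ▸ dvd_mul_left d m), h, Nat.mul_div_cancel _ (Nat.pos_of_ne_zero hd)]

section Group

variable {G : Type*} [Group G]

theorem zpow_ne_zpow_of_abs_sub_lt {z : G} {a b : ℤ} (hab : a ≠ b) (h : |a - b| < orderOf z) :
    z ^ a ≠ z ^ b := fun heq =>
  hab <| sub_eq_zero.mp <| Int.eq_zero_of_abs_lt_dvd (zpow_eq_zpow_iff_modEq.mp heq).symm.dvd h

theorem pow_ne_zpow_two_mul_of_orderOf_eq_six_mul {w : G} {k i : ℕ} (hw : orderOf w = 6 * k)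
    (hi : 1 ≤ i) (hik : i ≤ 2 * k - 2) :
    w ^ i ≠ w ^ (-(2 * k) : ℤ) ∧ w ^ i ≠ w ^ (2 * k : ℤ) := by
  rw [← zpow_natCast]
  constructor <;> refine zpow_ne_zpow_of_abs_sub_lt (by omega) (abs_lt.mpr ⟨?_, ?_⟩) <;>
    rw [hw] <;> push_cast <;> omega

end Group

theorem stmt_10_general (n k p : ℕ) (hn : 3 ≤ n) (hnk : n = 2 * k + 1)
    (z : (ZMod p)ˣ) (hz : orderOf z = 96 * k)
    (x₁ y₁ : (ZMod p)ˣ) (hx : x₁ = z ^ (1 + 8 * k)) (hy : y₁ = z ^ (16 * k)) :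
    orderOf y₁ = 6 ∧
    x₁ ^ (16 * k) = y₁ ^ (1 + 8 * k) ∧
    x₁ ^ 8 / y₁ ^ 4 = z ^ 8 ∧
    orderOf (x₁ ^ 8 / y₁ ^ 4) = 12 * k ∧
    ∀ i : ℕ, 1 ≤ i → i ≤ 2 * k - 2 →
      (y₁ ^ 8 / x₁ ^ 16) ^ i ≠ y₁ ^ 2 ∧ (y₁ ^ 8 / x₁ ^ 16) ^ i ≠ (y₁ ^ 2)⁻¹ := by
  subst hx hy
  have hratio : (z ^ (1 + 8 * k)) ^ 8 / (z ^ (16 * k)) ^ 4 = z ^ 8 := by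
    rw [div_eq_mul_inv]; group
  have hw : (z ^ (16 * k)) ^ 8 / (z ^ (1 + 8 * k)) ^ 16 = (z ^ 16)⁻¹ := by
    rw [div_eq_mul_inv]; group
  refine ⟨?_, by rw [← pow_mul, ← pow_mul, mul_comm], hratio, ?_, fun i hi hik => ?_⟩
  · exact orderOf_pow_of_orderOf_eq_mul (by omega) (hz.trans (by ring))
  · rw [hratio]
    exact orderOf_pow_of_orderOf_eq_mul (by norm_num) (hz.trans (by ring))
  · have hy_sq : (z ^ (16 * k)) ^ 2 = (z ^ 16)⁻¹ ^ (-(2 * k) : ℤ) := by group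
    have hy_sq_inv : ((z ^ (16 * k)) ^ 2)⁻¹ = (z ^ 16)⁻¹ ^ (2 * k : ℤ) := by group
    rw [hw, hy_sq_inv, hy_sq]
    refine pow_ne_zpow_two_mul_of_orderOf_eq_six_mul ?_ hi hik
    rw [orderOf_inv]
    exact orderOf_pow_of_orderOf_eq_mul (by norm_num) (hz.trans (by ring))

/-- Let `n = 2k+1 ≥ 3` and `p ≡ 1 (mod 48·n!)` be prime.  Let `z ∈ F_pˣ` have
order `96k`, and set `x₁ = z^{1+8k}`, `y₁ = z^{16k}`.  Then: `y₁` is a primitive 6th root of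
unity; `x₁^{16k} = y₁^{1+8k}`; the ratio `x₁⁸/y₁⁴ = z⁸` is a primitive `12k`-th root of unity;
and for all `1 ≤ i ≤ 2k-2`, `(y₁⁸/x₁^{16})^i ∉ {y₁², y₁⁻²}`. -/
theorem stmt_10 (n k p : ℕ) (hn : 3 ≤ n) (hnk : n = 2 * k + 1) (hp : p.Prime)
    (hcong : p % (48 * n.factorial) = 1)
    (z : (ZMod p)ˣ) (hz : orderOf z = 96 * k)
    (x₁ y₁ : (ZMod p)ˣ) (hx : x₁ = z ^ (1 + 8 * k)) (hy : y₁ = z ^ (16 * k)) :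
    orderOf y₁ = 6 ∧
    x₁ ^ (16 * k) = y₁ ^ (1 + 8 * k) ∧
    x₁ ^ 8 / y₁ ^ 4 = z ^ 8 ∧
    orderOf (x₁ ^ 8 / y₁ ^ 4) = 12 * k ∧
    ∀ i : ℕ, 1 ≤ i → i ≤ 2 * k - 2 →
      (y₁ ^ 8 / x₁ ^ 16) ^ i ≠ y₁ ^ 2 ∧ (y₁ ^ 8 / x₁ ^ 16) ^ i ≠ (y₁ ^ 2)⁻¹ :=
  stmt_10_general n k p hn hnk z hz x₁ y₁ hx hy
end

section
/- Let W be a shuffle of k decreasing arithmetic progressions: i.e., for each i let T_i = (a_i, a_i − 1, …, a_i − (n_i − 1)) be a decreasing run of integers, and let (c₁,…,c_n) be obtained by interleaving the T_i via a permutation w increasing on each block. Then the flag Fil_j = span(e_{w⁻¹(1)}, …, e_{w⁻¹(j)}) in the direct sum of Jordan blocks ⊕_i Sp_{n_i} is stable under the monodromy operator N. -/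
/-!
The monodromy operator sends a basis vector `e_u` either to `0` (when `u` opens its block) or to
`e_{u-1}` with `u - 1` in the same block. As `w` is increasing on blocks, `w (u - 1) < w u`, so
`N` maps each generator `e_u`, `w u < j`, of `Fil_j` into `Fil_j`. The blocks, read off from
partial sums of the sizes, cover all indices.
-/

open Finset

theorem Nat.exists_le_and_lt_succ_of_le_of_lt {α : Type*} [LinearOrder α] (f : ℕ → α) {u : α} :
    ∀ {k : ℕ}, f 0 ≤ u → u < f k → ∃ i < k, f i ≤ u ∧ u < f (i + 1)
  | 0, h0, hk => absurd hk (not_lt.2 h0)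
  | k + 1, h0, hk => by
    by_cases hu : u < f k
    · obtain ⟨i, hik, hi⟩ := Nat.exists_le_and_lt_succ_of_le_of_lt f h0 hu
      exact ⟨i, hik.trans k.lt_succ_self, hi⟩
    · exact ⟨k, k.lt_succ_self, not_lt.1 hu, hk⟩

theorem Fin.exists_sum_filter_lt_le_and_lt_add {k : ℕ} (sizes : Fin k → ℕ) {u : ℕ}
    (hu : u < ∑ i, sizes i) :
    ∃ i : Fin k, ∑ j ∈ univ.filter (· < i), sizes j ≤ u ∧
      u < ∑ j ∈ univ.filter (· < i), sizes j + sizes i := by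
  set f : ℕ → ℕ := fun m => ∑ j ∈ univ.filter (fun j : Fin k => (j : ℕ) < m), sizes j
  have hf_succ (i : Fin k) : f (i + 1) = f i + sizes i := by
    have : univ.filter (fun j : Fin k => (j : ℕ) < i + 1) =
        insert i (univ.filter (fun j : Fin k => (j : ℕ) < i)) := by
      ext j
      simp [le_iff_eq_or_lt, Fin.val_inj]
    simp only [f, this, sum_insert (by simp : i ∉ univ.filter (fun j : Fin k => (j : ℕ) < i)),
      add_comm]
  obtain ⟨i, hik, h0, h1⟩ := Nat.exists_le_and_lt_succ_of_le_of_lt f (u := u) (k := k)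
    (by simp [f]) (by simpa [f] using hu)
  rw [hf_succ ⟨i, hik⟩] at h1
  exact ⟨⟨i, hik⟩, by simpa [f, Fin.lt_def] using h0, by simpa [f, Fin.lt_def] using h1⟩

theorem exists_mem_block {n k : ℕ} (sizes : Fin k → ℕ) (hn : n = ∑ i, sizes i)
    (start : Fin k → ℕ)
    (hstart : ∀ i : Fin k, start i = ∑ j ∈ univ.filter (fun j => j < i), sizes j)
    (block : Fin k → Finset (Fin n))
    (hblock : ∀ (i : Fin k) (t : Fin n),
      t ∈ block i ↔ start i ≤ (t : ℕ) ∧ (t : ℕ) < start i + sizes i)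
    (u : Fin n) : ∃ i, u ∈ block i := by
  obtain ⟨i, hi⟩ := Fin.exists_sum_filter_lt_le_and_lt_add sizes (u.isLt.trans_eq hn)
  exact ⟨i, (hblock i u).2 (by rwa [hstart i])⟩

theorem apply_single_eq_zero_or_exists_lt {K : Type*} [Semiring K] {n k : ℕ} (sizes : Fin k → ℕ)
    (start : Fin k → ℕ) (block : Fin k → Finset (Fin n))
    (hblock : ∀ (i : Fin k) (t : Fin n),
      t ∈ block i ↔ start i ≤ (t : ℕ) ∧ (t : ℕ) < start i + sizes i)
    (N : (Fin n → K) →ₗ[K] Fin n → K)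
    (hN0 : ∀ (i : Fin k) (t : Fin n), t ∈ block i → (t : ℕ) = start i →
      N (Pi.single t 1) = 0)
    (hNsucc : ∀ (i : Fin k) (s t : Fin n), s ∈ block i → t ∈ block i → (s : ℕ) + 1 = (t : ℕ) →
      N (Pi.single t 1) = Pi.single s 1)
    (w : Equiv.Perm (Fin n))
    (hw : ∀ (i : Fin k), ∀ s ∈ block i, ∀ t ∈ block i, s < t → w s < w t)
    {i : Fin k} {u : Fin n} (hu : u ∈ block i) :
    N (Pi.single u 1) = 0 ∨ ∃ s, w s < w u ∧ N (Pi.single u 1) = Pi.single s 1 := by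
  obtain ⟨hstart_le, hlt_end⟩ := (hblock i u).1 hu
  rcases hstart_le.eq_or_lt with hfirst | hlater
  · exact .inl (hN0 i u hu hfirst.symm)
  · let s : Fin n := ⟨u - 1, by omega⟩
    have hs : s ∈ block i := (hblock i s).2 ⟨by simp [s]; omega, by simp [s]; omega⟩
    have hsu : (s : ℕ) + 1 = u := by simp [s]; omega
    exact .inr ⟨s, hw i s hs u hu (Fin.lt_def.2 (by omega)), hNsucc i s u hs hu hsu⟩

theorem stmt_13_general (K : Type*) [Field K] (k n : ℕ) (sizes : Fin k → ℕ) (hn : n = ∑ i, sizes i)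
    (start : Fin k → ℕ)
    (hstart : ∀ i : Fin k, start i = ∑ j ∈ Finset.univ.filter (fun j => j < i), sizes j)
    (block : Fin k → Finset (Fin n))
    (hblock : ∀ (i : Fin k) (t : Fin n),
      t ∈ block i ↔ start i ≤ (t : ℕ) ∧ (t : ℕ) < start i + sizes i)
    (N : (Fin n → K) →ₗ[K] Fin n → K)
    (hN0 : ∀ (i : Fin k) (t : Fin n), t ∈ block i → (t : ℕ) = start i →
      N (Pi.single t 1) = 0)
    (hNsucc : ∀ (i : Fin k) (s t : Fin n), s ∈ block i → t ∈ block i → (s : ℕ) + 1 = (t : ℕ) →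
      N (Pi.single t 1) = Pi.single s 1)
    (w : Equiv.Perm (Fin n))
    (hw : ∀ (i : Fin k), ∀ s ∈ block i, ∀ t ∈ block i, s < t → w s < w t)
    (j : ℕ) :
    ∀ x ∈ Submodule.span K
        ((fun t : Fin n => (Pi.single (w.symm t) 1 : Fin n → K)) '' {t : Fin n | (t : ℕ) < j}),
      N x ∈ Submodule.span K
        ((fun t : Fin n => (Pi.single (w.symm t) 1 : Fin n → K)) '' {t : Fin n | (t : ℕ) < j}) := by
  intro x hx
  refine Submodule.map_span_le N _ _ |>.2 ?_ ⟨x, hx, rfl⟩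
  rintro _ ⟨t, ht, rfl⟩
  obtain ⟨i, hi⟩ := exists_mem_block sizes hn start hstart block hblock (w.symm t)
  rcases apply_single_eq_zero_or_exists_lt sizes start block hblock N hN0 hNsucc w hw hi with
    hzero | ⟨s, hs, hNs⟩
  · simp only [hzero, Submodule.zero_mem]
  · rw [Equiv.apply_symm_apply] at hs
    refine hNs ▸ Submodule.subset_span ⟨w s, ?_, by simp⟩
    exact lt_trans (Fin.lt_def.1 hs) ht

/-- Let `W` be a shuffle of `k` decreasing arithmetic progressions: for each `i`
let `T_i = (a_i, a_i - 1, …, a_i - (n_i - 1))` be a decreasing run of integers, and let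
`(c₁, …, c_n)` be obtained by interleaving the `T_i` via a permutation `w` increasing on each
block.  Then the flag `Fil_j = span(e_{w⁻¹(1)}, …, e_{w⁻¹(j)})` in the direct sum of Jordan
blocks `⊕ᵢ Sp_{n_i}` is stable under the monodromy operator `N` (which satisfies
`N e_{(i,0)} = 0` and `N e_{(i,j+1)} = e_{(i,j)}` within each block). -/
theorem stmt_13 (K : Type*) [Field K] (k n : ℕ) (sizes : Fin k → ℕ) (hn : n = ∑ i, sizes i)
    (start : Fin k → ℕ)
    (hstart : ∀ i : Fin k, start i = ∑ j ∈ Finset.univ.filter (fun j => j < i), sizes j)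
    (block : Fin k → Finset (Fin n))
    (hblock : ∀ (i : Fin k) (t : Fin n),
      t ∈ block i ↔ start i ≤ (t : ℕ) ∧ (t : ℕ) < start i + sizes i)
    (a : Fin k → ℤ) (c : Fin n → ℤ)
    (hc : ∀ (i : Fin k), ∀ t ∈ block i, c t = a i - (((t : ℕ) : ℤ) - (start i : ℤ)))
    (N : (Fin n → K) →ₗ[K] Fin n → K)
    (hN0 : ∀ (i : Fin k) (t : Fin n), t ∈ block i → (t : ℕ) = start i →
      N (Pi.single t 1) = 0)
    (hNsucc : ∀ (i : Fin k) (s t : Fin n), s ∈ block i → t ∈ block i → (s : ℕ) + 1 = (t : ℕ) →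
      N (Pi.single t 1) = Pi.single s 1)
    (w : Equiv.Perm (Fin n))
    (hw : ∀ (i : Fin k), ∀ s ∈ block i, ∀ t ∈ block i, s < t → w s < w t)
    (j : ℕ) :
    ∀ x ∈ Submodule.span K
        ((fun t : Fin n => (Pi.single (w.symm t) 1 : Fin n → K)) '' {t : Fin n | (t : ℕ) < j}),
      N x ∈ Submodule.span K
        ((fun t : Fin n => (Pi.single (w.symm t) 1 : Fin n → K)) '' {t : Fin n | (t : ℕ) < j}) :=
  stmt_13_general K k n sizes hn start hstart block hblock N hN0 hNsucc w hw j
end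

section
/- Let G be a group, ρ̄ = χ̄₁ ⊕ ⋯ ⊕ χ̄_n a direct sum of characters χ̄_i: G → kˣ over a field k, and suppose there is a subgroup G' ≤ G of index d ≤ n and a d-dimensional-induction isomorphism ρ̄ ≅ Ind_{G'}^{G} τ̄ for some representation τ̄ of G'. If for all i ≠ j the characters χ̄_i|_{G'} are pairwise distinct (e.g. if each ratio χ̄_i/χ̄_j has order greater than n on G, hence nontrivial on any subgroup of index ≤ n), then d = 1 and G' = G, i.e. ρ̄ is primitive. -/
/-!
The block `V c₀` at the trivial coset is stable under `ρ(G')`, and the characters, being pairwise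
distinct on `G'`, give diagonal operators separating the coordinates. The operators of this kind
generate all diagonal matrices (Lagrange interpolation), so `V c₀` is stable under every diagonal
operator, in particular under all of `ρ(G)`. Hence every block `V (g • c₀) = ρ(g) V c₀` equals
`V c₀`, which is then `⊤`; independence of equal nonzero blocks leaves room for only one coset.
-/

namespace Submodule

variable {k ι : Type*} [CommSemiring k]

def multipliers (W : Submodule k (ι → k)) : Subalgebra k (ι → k) where
  carrier := {a | ∀ v ∈ W, a * v ∈ W}
  mul_mem' {a b} ha hb v hv := by
    rw [mul_assoc]
    exact ha _ (hb v hv)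
  add_mem' {a b} ha hb v hv := by
    rw [add_mul]
    exact W.add_mem (ha v hv) (hb v hv)
  algebraMap_mem' r v hv := by
    rw [Algebra.algebraMap_eq_smul_one, smul_mul_assoc, one_mul]
    exact W.smul_mem r hv

theorem mem_multipliers {W : Submodule k (ι → k)} {a : ι → k} :
    a ∈ W.multipliers ↔ ∀ v ∈ W, a * v ∈ W :=
  Iff.rfl

end Submodule

theorem Subalgebra.eq_top_of_separatesPoints {k ι : Type*} [Field k] [Finite ι]
    (S : Subalgebra k (ι → k)) (hS : ∀ i j, i ≠ j → ∃ a ∈ S, a i ≠ a j) : S = ⊤ := by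
  classical
  have := Fintype.ofFinite ι
  choose! a haS hne using hS
  have single_mem (i : ι) : Pi.single i 1 ∈ S := by
    -- the factor indexed by `j` vanishes at `j` and equals `1` at `i`
    have : ∏ j ∈ Finset.univ.erase i, (a i j i - a i j j)⁻¹ • (a i j - algebraMap k _ (a i j j)) =
        Pi.single i 1 := by
      funext m
      rw [Finset.prod_apply]
      rcases eq_or_ne m i with rfl | hm
      · rw [Pi.single_eq_same]
        apply Finset.prod_eq_one
        intro j hj
        have := sub_ne_zero.mpr (hne m j (Finset.ne_of_mem_erase hj).symm)
        simp [Pi.algebraMap_apply, this]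
      · rw [Pi.single_eq_of_ne hm]
        exact Finset.prod_eq_zero (Finset.mem_erase.mpr ⟨hm, Finset.mem_univ m⟩)
          (by simp [Pi.algebraMap_apply])
    rw [← this]
    exact S.prod_mem fun j hj =>
      S.smul_mem (S.sub_mem (haS i j (Finset.ne_of_mem_erase hj).symm) (S.algebraMap_mem _)) _
  refine eq_top_iff.mpr fun f _ => ?_
  rw [← Finset.univ_sum_single f]
  refine S.sum_mem fun i _ => ?_
  rw [← mul_one (f i), ← smul_eq_mul, Pi.single_smul]
  exact S.smul_mem (single_mem i) _

theorem Submodule.multipliers_eq_top_of_separatesPoints {k ι : Type*} [Field k] [Finite ι]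
    {W : Submodule k (ι → k)} (hW : ∀ i j, i ≠ j → ∃ a, a i ≠ a j ∧ ∀ v ∈ W, a * v ∈ W) :
    W.multipliers = ⊤ :=
  Subalgebra.eq_top_of_separatesPoints _ fun i j hij =>
    let ⟨a, hne, ha⟩ := hW i j hij
    ⟨a, ha, hne⟩

section DiagonalRepresentation

variable {k G ι : Type*} [Field k] [Group G] {χ : ι → G →* kˣ}
  {ρ : Representation k G (ι → k)}

theorem Representation.apply_eq_mul_of_diagonal (hρ : ∀ g v i, ρ g v i = χ i g * v i)
    (g : G) (v : ι → k) : ρ g v = (fun i => (χ i g : k)) * v :=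
  funext (hρ g v)

theorem Representation.map_le_of_diagonal [Finite ι] (hρ : ∀ g v i, ρ g v i = χ i g * v i)
    {H : Subgroup G} (hH : ∀ i j, i ≠ j → (χ i).comp H.subtype ≠ (χ j).comp H.subtype)
    {W : Submodule k (ι → k)} (hW : ∀ h ∈ H, W.map (ρ h) ≤ W) (g : G) :
    W.map (ρ g) ≤ W := by
  have hmul : W.multipliers = ⊤ := by
    refine Submodule.multipliers_eq_top_of_separatesPoints fun i j hij => ?_
    obtain ⟨h, hne⟩ := DFunLike.ne_iff.mp (hH i j hij)
    refine ⟨fun m => (χ m h : k), fun e => hne (Units.ext e), fun v hv => ?_⟩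
    rw [← apply_eq_mul_of_diagonal hρ]
    exact hW h h.2 ⟨v, hv, rfl⟩
  rintro _ ⟨v, hv, rfl⟩
  rw [apply_eq_mul_of_diagonal hρ]
  have hdiag : (fun i => (χ i g : k)) ∈ W.multipliers := hmul ▸ Algebra.mem_top
  exact Submodule.mem_multipliers.mp hdiag v hv

end DiagonalRepresentation

theorem Representation.map_eq_of_forall_map_le {k G M : Type*} [CommSemiring k] [Group G]
    [AddCommMonoid M] [Module k M] (ρ : Representation k G M) {W : Submodule k M}
    (hW : ∀ g, W.map (ρ g) ≤ W) (g : G) : W.map (ρ g) = W := by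
  refine le_antisymm (hW g) ?_
  calc W = (W.map (ρ g⁻¹)).map (ρ g) := by
        rw [← Submodule.map_comp, ← Module.End.mul_eq_comp, ← map_mul, mul_inv_cancel, map_one,
          Module.End.one_eq_id, Submodule.map_id]
    _ ≤ W.map (ρ g) := Submodule.map_mono (hW g⁻¹)

theorem stmt_19_general (k : Type*) [Field k] (G : Type*) [Group G] (n : ℕ) (hn : 0 < n)
    (χ : Fin n → (G →* kˣ))
    (ρ : Representation k G (Fin n → k))
    (hρ : ∀ (g : G) (v : Fin n → k) (i : Fin n), ρ g v i = ((χ i g : k)) * v i)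
    (G' : Subgroup G) (d : ℕ) (hd : G'.index = d)
    (V : G ⧸ G' → Submodule k (Fin n → k))
    (hsup : ⨆ c, V c = ⊤)
    (hind : iSupIndep V)
    (hmap : ∀ (g : G) (c : G ⧸ G'), Submodule.map (ρ g) (V c) = V (g • c))
    (hdist : ∀ i j : Fin n, i ≠ j → (χ i).comp G'.subtype ≠ (χ j).comp G'.subtype) :
    d = 1 ∧ G' = ⊤ := by
  set c₀ : G ⧸ G' := ((1 : G) : G ⧸ G')
  have hstab (h : G) (hh : h ∈ G') : (V c₀).map (ρ h) ≤ V c₀ := by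
    have hfix : h • c₀ = c₀ :=
      MulAction.mem_stabilizer_iff.mp (by rwa [MulAction.stabilizer_quotient])
    rw [hmap, hfix]
  have hinv := ρ.map_eq_of_forall_map_le (ρ.map_le_of_diagonal hρ hdist hstab)
  have hconst (c : G ⧸ G') : V c = V c₀ := by
    obtain ⟨g, rfl⟩ := MulAction.exists_smul_eq G c₀ c
    exact (hmap g c₀).symm.trans (hinv g)
  have htop : V c₀ = ⊤ := by
    rw [← hsup]
    exact le_antisymm (le_iSup V c₀) (iSup_le fun c => (hconst c).le)
  have : Nonempty (Fin n) := Fin.pos_iff_nonempty.mp hn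
  have hinj := hind.injective fun c => (hconst c).trans htop ▸ top_ne_bot
  have : Subsingleton (G ⧸ G') := ⟨fun c c' => hinj ((hconst c).trans (hconst c').symm)⟩
  have hG' := QuotientGroup.subgroup_eq_top_of_subsingleton G' this
  exact ⟨hd ▸ Subgroup.index_eq_one.mpr hG', hG'⟩

/-- Let `G` be a group, `ρ̄ = χ̄₁ ⊕ ⋯ ⊕ χ̄_n` a direct sum of characters
`χ̄ᵢ : G → kˣ` over a field `k` (realized as the diagonal representation on `kⁿ`), and
suppose there is a subgroup `G' ≤ G` of index `d ≤ n` and an isomorphism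
`ρ̄ ≅ Ind_{G'}^G τ̄` for some representation `τ̄` of `G'` — realized, as usual, by a system of
imprimitivity: a decomposition `kⁿ = ⊕_{c ∈ G/G'} V_c` into jointly independent spanning
subspaces with `ρ̄(g)·V_c = V_{g·c}`.  If the restricted characters `χ̄ᵢ|_{G'}` are pairwise
distinct, then `d = 1` and `G' = G`, i.e. `ρ̄` is primitive. -/
theorem stmt_19 (k : Type*) [Field k] (G : Type*) [Group G] (n : ℕ) (hn : 0 < n)
    (χ : Fin n → (G →* kˣ))
    (ρ : Representation k G (Fin n → k))
    (hρ : ∀ (g : G) (v : Fin n → k) (i : Fin n), ρ g v i = ((χ i g : k)) * v i)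
    (G' : Subgroup G) (d : ℕ) (hd : G'.index = d) (hdn : d ≤ n)
    (V : G ⧸ G' → Submodule k (Fin n → k))
    (hsup : ⨆ c, V c = ⊤)
    (hind : iSupIndep V)
    (hmap : ∀ (g : G) (c : G ⧸ G'), Submodule.map (ρ g) (V c) = V (g • c))
    (hdist : ∀ i j : Fin n, i ≠ j → (χ i).comp G'.subtype ≠ (χ j).comp G'.subtype) :
    d = 1 ∧ G' = ⊤ :=
  stmt_19_general k G n hn χ ρ hρ G' d hd V hsup hind hmap hdist
end
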